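/- arXiv:2409.20275 — 4 statements merged into one kernel-verified Lean document; each statement's English description precedes it below -/
import Mathlib

section
/- A real n×m matrix X is strictly totally positive if and only if all of its row-initial and column-initial minors are positive, i.e., det(X_{(t:t+j−1),(1:j)}) > 0 and det(X_{(1:j),(t:t+j−1)}) > 0 for every order j ∈ {1,…,min{n,m}} and every admissible starting index t. -/
/-!
The Desnanot–Jacobi identity `det A · det A° = det A₁₁ · det Aₙₙ - det A₁ₙ · det Aₙ₁` (`A°` the
interior of `A`, `Aᵢⱼ` the matrix without row `i` and column `j`) propagates positivity.
Bordering a window of consecutive rows and columns by the row above and the column to its left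
writes its minor, times a positive minor, as a positive combination of minors of windows starting
earlier, so by induction all minors with consecutive rows and columns are positive.
If the rows `f` of a minor skip an index between `f 0` and `f last`, inserting that row and
applying the identity to the enlarged matrix with a unit column prepended (a three-term Sylvester
relation) writes the minor, times a positive minor, as a positive combination of minors of lower
order or with rows spread over a shorter range. Induction on the order and the spread, in the rows
and then through the transpose in the columns, makes all minors positive.
-/

open Matrix Polynomial Filter

noncomputable def signChanges (l : List ℝ) : ℕ :=
  (l.zip l.tail).countP (fun p => decide (p.1 * p.2 < 0))

/-- Variation `V(u)`: number of sign changes after deleting zero entries, `-1` for the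
zero vector. -/
noncomputable def variation {m : ℕ} (u : Fin m → ℝ) : ℤ :=
  if ((List.ofFn u).filter fun x => decide (x ≠ 0)) = [] then -1
  else (signChanges ((List.ofFn u).filter fun x => decide (x ≠ 0)) : ℤ)

/-- Maximal variation `V_z(u)`: largest number of sign changes obtainable by replacing every
zero entry of `u` by an arbitrary nonzero real number. -/
noncomputable def maxVariation {m : ℕ} (u : Fin m → ℝ) : ℤ :=
  sSup {v : ℤ | ∃ w : Fin m → ℝ, (∀ i, w i ≠ 0) ∧ (∀ i, u i ≠ 0 → w i = u i) ∧
    v = (signChanges (List.ofFn w) : ℤ)}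

/-- `X` is strictly `k`-variation bounding. -/
def SVB {n m : ℕ} (X : Matrix (Fin n) (Fin m) ℝ) (k : ℕ) : Prop :=
  ∀ u : Fin m → ℝ, u ≠ 0 → variation u ≤ (k : ℤ) → maxVariation (X.mulVec u) ≤ (k : ℤ)

/-- `X` is `k`-variation bounding. -/
def VB {n m : ℕ} (X : Matrix (Fin n) (Fin m) ℝ) (k : ℕ) : Prop :=
  ∀ u : Fin m → ℝ, u ≠ 0 → variation u ≤ (k : ℤ) → variation (X.mulVec u) ≤ (k : ℤ)

/-- `X` is `k`-variation diminishing. -/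
def VD {n m : ℕ} (X : Matrix (Fin n) (Fin m) ℝ) (k : ℕ) : Prop :=
  ∀ j : ℕ, j ≤ k → VB X j

/-- `X` is strictly `k`-sign consistent: all `k×k` minors strictly positive, or all strictly
negative. -/
def SSC {n m : ℕ} (X : Matrix (Fin n) (Fin m) ℝ) (k : ℕ) : Prop :=
  (∀ (f : Fin k → Fin n) (g : Fin k → Fin m), StrictMono f → StrictMono g →
    0 < (X.submatrix f g).det) ∨
  (∀ (f : Fin k → Fin n) (g : Fin k → Fin m), StrictMono f → StrictMono g →
    (X.submatrix f g).det < 0)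

/-- `X` is `k`-sign consistent: all `k×k` minors nonnegative, or all nonpositive. -/
def SC {n m : ℕ} (X : Matrix (Fin n) (Fin m) ℝ) (k : ℕ) : Prop :=
  (∀ (f : Fin k → Fin n) (g : Fin k → Fin m), StrictMono f → StrictMono g →
    0 ≤ (X.submatrix f g).det) ∨
  (∀ (f : Fin k → Fin n) (g : Fin k → Fin m), StrictMono f → StrictMono g →
    (X.submatrix f g).det ≤ 0)

/-- `X` is `k`-sign regular. -/
def SR {n m : ℕ} (X : Matrix (Fin n) (Fin m) ℝ) (k : ℕ) : Prop :=
  ∀ j : ℕ, 1 ≤ j → j ≤ k → SC X j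

/-- `X` is strictly totally positive. -/
def STP {n m : ℕ} (X : Matrix (Fin n) (Fin m) ℝ) : Prop :=
  ∀ (j : ℕ) (f : Fin j → Fin n) (g : Fin j → Fin m), StrictMono f → StrictMono g →
    0 < (X.submatrix f g).det

/-- `X` is `k`-positive: all `j×j` minors nonnegative for `j = 1, …, k`. -/
def KPos {n m : ℕ} (X : Matrix (Fin n) (Fin m) ℝ) (k : ℕ) : Prop :=
  ∀ j : ℕ, 1 ≤ j → j ≤ k → ∀ (f : Fin j → Fin n) (g : Fin j → Fin m),
    StrictMono f → StrictMono g → 0 ≤ (X.submatrix f g).det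

/-- `X` is strictly `k`-positive: all `j×j` minors positive for `j = 1, …, k`. -/
def KPosStrict {n m : ℕ} (X : Matrix (Fin n) (Fin m) ℝ) (k : ℕ) : Prop :=
  ∀ j : ℕ, 1 ≤ j → j ≤ k → ∀ (f : Fin j → Fin n) (g : Fin j → Fin m),
    StrictMono f → StrictMono g → 0 < (X.submatrix f g).det

/-- The `t`-step observability matrix `O_t` with `i`-th row `c Aⁱ⁻¹`. -/
noncomputable def obsMat {n : ℕ} (A : Matrix (Fin n) (Fin n) ℝ) (c : Fin n → ℝ) (t : ℕ) :
    Matrix (Fin t) (Fin n) ℝ :=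
  Matrix.of fun i j => Matrix.vecMul c (A ^ (i : ℕ)) j

/-- The pair `(A, c)` is observable. -/
def Observable {n : ℕ} (A : Matrix (Fin n) (Fin n) ℝ) (c : Fin n → ℝ) : Prop :=
  (obsMat A c n).det ≠ 0

/-- The observability operator of `(A, c)` is strictly `k`-variation bounding. -/
def ObsSVB {n : ℕ} (A : Matrix (Fin n) (Fin n) ℝ) (c : Fin n → ℝ) (k : ℕ) : Prop :=
  ∀ t : ℕ, 0 < t → SVB (obsMat A c t) k

/-- The observability operator of `(A, c)` is `k`-variation bounding. -/
def ObsVB {n : ℕ} (A : Matrix (Fin n) (Fin n) ℝ) (c : Fin n → ℝ) (k : ℕ) : Prop :=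
  ∀ t : ℕ, 0 < t → VB (obsMat A c t) k

/-- The matrix `M_r[t]`: first `n - r` rows `c, cA, …, cA^{n-r-1}`, last `r` rows
`cA^{n-r+t-1}, …, cA^{n+t-2}`. -/
noncomputable def Mrt {n : ℕ} (A : Matrix (Fin n) (Fin n) ℝ) (c : Fin n → ℝ) (r t : ℕ) :
    Matrix (Fin n) (Fin n) ℝ :=
  Matrix.of fun i j =>
    Matrix.vecMul c (A ^ (if (i : ℕ) < n - r then (i : ℕ) else (i : ℕ) + t - 1)) j

section DesnanotJacobi
variable {R : Type*} [CommRing R] {k : ℕ}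

lemma det_one_updateRow_zero_updateRow_last (u v : Fin (k + 2) → R) :
    (((1 : Matrix (Fin (k + 2)) (Fin (k + 2)) R).updateRow 0 u).updateRow (Fin.last _) v).det =
      u 0 * v (Fin.last _) - u (Fin.last _) * v 0 := by
  have h0 : (0 : Fin (k + 2)) ≠ Fin.last _ := Fin.last_pos.ne
  -- A rank-two perturbation `1 + U * V` of the identity: by Weinstein–Aronszajn its determinant
  -- is the `2 × 2` determinant `det (1 + V * U)`.
  let U : Matrix (Fin (k + 2)) (Fin 2) R := of fun r c => if r = ![0, Fin.last _] c then 1 else 0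
  let V : Matrix (Fin 2) (Fin (k + 2)) R := of ![u - Pi.single 0 1, v - Pi.single (Fin.last _) 1]
  have hUV : ((1 : Matrix (Fin (k + 2)) (Fin (k + 2)) R).updateRow 0 u).updateRow (Fin.last _) v
      = 1 + U * V := by
    ext r c
    rcases eq_or_ne r (Fin.last _) with rfl | hl
    · simp [U, V, mul_apply, Fin.sum_univ_two, h0.symm, Pi.single_apply, one_apply, eq_comm]
    rcases eq_or_ne r 0 with rfl | h0'
    · simp [U, V, mul_apply, Fin.sum_univ_two, h0, Pi.single_apply, one_apply, eq_comm]
    · simp [U, V, mul_apply, Fin.sum_univ_two, hl, h0', Pi.single_apply, one_apply]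
  have hVU : V * U = of fun a b => V a (![0, Fin.last _] b) := by
    ext a b
    simp [U, mul_apply]
  rw [hUV, det_one_add_mul_comm, hVU, det_fin_two]
  simp [V, h0, h0.symm]

lemma det_updateRow_single (A : Matrix (Fin (k + 1)) (Fin (k + 1)) R) (i : Fin (k + 1)) :
    (A.updateRow i (Pi.single i 1)).det = (A.submatrix i.succAbove i.succAbove).det := by
  rw [det_succ_row _ i, Finset.sum_eq_single i (fun j _ hj => by simp [hj]) (by simp)]
  simp

lemma det_updateRow_single_zero_updateRow_single_last (A : Matrix (Fin (k + 2)) (Fin (k + 2)) R) :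
    ((A.updateRow 0 (Pi.single 0 1)).updateRow (Fin.last _) (Pi.single (Fin.last _) 1)).det =
      (A.submatrix (Fin.succ ∘ Fin.castSucc) (Fin.succ ∘ Fin.castSucc)).det := by
  have hsub : (A.updateRow (Fin.last _) (Pi.single (Fin.last _) 1)).submatrix Fin.succ Fin.succ =
      (A.submatrix Fin.succ Fin.succ).updateRow (Fin.last k) (Pi.single (Fin.last k) 1) := by
    ext r c
    simp [updateRow_apply, Pi.single_apply, ← Fin.succ_last]
  rw [updateRow_comm _ Fin.last_pos.ne, det_updateRow_single, Fin.succAbove_zero, hsub,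
    det_updateRow_single, Fin.succAbove_last, submatrix_submatrix]

lemma desnanot_jacobi_mul_det (A : Matrix (Fin (k + 2)) (Fin (k + 2)) R) :
    ((A.submatrix Fin.succ Fin.succ).det * (A.submatrix Fin.castSucc Fin.castSucc).det -
        (A.submatrix Fin.castSucc Fin.succ).det * (A.submatrix Fin.succ Fin.castSucc).det) * A.det =
      A.det * (A.submatrix (Fin.succ ∘ Fin.castSucc) (Fin.succ ∘ Fin.castSucc)).det * A.det := by
  have h0 : (0 : Fin (k + 2)) ≠ Fin.last _ := Fin.last_pos.ne
  -- Rows `0` and `last` of `adjugate A` turn those rows of `A` into `det A` times unit vectors.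
  set C := ((1 : Matrix (Fin (k + 2)) (Fin (k + 2)) R).updateRow 0 (adjugate A 0)).updateRow
    (Fin.last _) (adjugate A (Fin.last _))
  have hrow (i : Fin (k + 2)) : adjugate A i ᵥ* A = A.det • Pi.single i 1 := by
    ext j
    simp [vecMul, dotProduct, ← mul_apply, adjugate_mul, one_apply, Pi.single_apply, eq_comm]
  have hCA : C * A = (A.updateRow 0 (A.det • Pi.single 0 1)).updateRow (Fin.last _)
      (A.det • Pi.single (Fin.last _) 1) := by
    rw [updateRow_mul, updateRow_mul, Matrix.one_mul, hrow, hrow]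
  have hdetCA : (C * A).det =
      A.det * A.det * (A.submatrix (Fin.succ ∘ Fin.castSucc) (Fin.succ ∘ Fin.castSucc)).det := by
    rw [hCA, det_updateRow_smul, updateRow_comm _ h0, det_updateRow_smul, updateRow_comm _ h0.symm,
      det_updateRow_single_zero_updateRow_single_last, mul_assoc]
  have hdetC : C.det =
      (A.submatrix Fin.succ Fin.succ).det * (A.submatrix Fin.castSucc Fin.castSucc).det -
        (A.submatrix Fin.castSucc Fin.succ).det * (A.submatrix Fin.succ Fin.castSucc).det := by
    simp only [C, det_one_updateRow_zero_updateRow_last, adjugate_fin_succ_eq_det_submatrix,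
      Fin.succAbove_zero, Fin.succAbove_last, Fin.val_zero, Fin.val_last, add_zero, zero_add]
    rw [Even.neg_one_pow ⟨k + 1, rfl⟩]
    rcases neg_one_pow_eq_or R (k + 1) with hσ | hσ <;> rw [hσ] <;> ring
  rw [← hdetC, ← det_mul, hdetCA]
  ring

theorem desnanot_jacobi (A : Matrix (Fin (k + 2)) (Fin (k + 2)) R) :
    A.det * (A.submatrix (Fin.succ ∘ Fin.castSucc) (Fin.succ ∘ Fin.castSucc)).det =
      (A.submatrix Fin.succ Fin.succ).det * (A.submatrix Fin.castSucc Fin.castSucc).det -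
        (A.submatrix Fin.castSucc Fin.succ).det * (A.submatrix Fin.succ Fin.castSucc).det := by
  -- For the generic matrix the factor `det` can be cancelled, since it is a nonzero polynomial.
  let X := mvPolynomialX (Fin (k + 2)) (Fin (k + 2)) ℤ
  have hX : X.det * (X.submatrix (Fin.succ ∘ Fin.castSucc) (Fin.succ ∘ Fin.castSucc)).det =
      (X.submatrix Fin.succ Fin.succ).det * (X.submatrix Fin.castSucc Fin.castSucc).det -
        (X.submatrix Fin.castSucc Fin.succ).det * (X.submatrix Fin.succ Fin.castSucc).det :=
    (mul_right_cancel₀ (det_mvPolynomialX_ne_zero _ ℤ) (desnanot_jacobi_mul_det X)).symm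
  let φ := MvPolynomial.aeval (R := ℤ) fun p : Fin (k + 2) × Fin (k + 2) => A p.1 p.2
  have hA : X.map φ = A := mvPolynomialX_mapMatrix_aeval ℤ A
  simpa only [map_mul, map_sub, AlgHom.map_det, AlgHom.mapMatrix_apply, ← submatrix_map, hA]
    using congrArg φ hX

end DesnanotJacobi

section PrependCol
variable {α : Type*} {p p' q : ℕ}

def prependCol (c : Fin p → α) (Y : Matrix (Fin p) (Fin q) α) : Matrix (Fin p) (Fin (q + 1)) α :=
  of fun r => Fin.cons (c r) (Y r)

lemma prependCol_submatrix_succ (c : Fin p → α) (Y : Matrix (Fin p) (Fin q) α)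
    (r : Fin p' → Fin p) : (prependCol c Y).submatrix r Fin.succ = Y.submatrix r id :=
  rfl

lemma prependCol_submatrix_castSucc (c : Fin p → α) (Y : Matrix (Fin p) (Fin (q + 1)) α)
    (r : Fin p' → Fin p) :
    (prependCol c Y).submatrix r Fin.castSucc =
      prependCol (c ∘ r) (Y.submatrix r Fin.castSucc) := by
  ext i j
  cases j using Fin.cases <;> rfl

lemma det_prependCol_single {R : Type*} [CommRing R] (Y : Matrix (Fin (q + 1)) (Fin q) R)
    (s : Fin (q + 1)) :
    (prependCol (Pi.single s 1) Y).det = (-1) ^ (s : ℕ) * (Y.submatrix s.succAbove id).det := by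
  rw [det_succ_column_zero,
    Finset.sum_eq_single s (fun i _ hi => by simp [prependCol, hi]) (by simp)]
  simp only [prependCol, of_apply, Pi.single_eq_same, Fin.cons_zero, mul_one]
  rfl

end PrependCol

theorem det_submatrix_succAbove_mul_det {R : Type*} [CommRing R] {p : ℕ}
    (Y : Matrix (Fin (p + 2)) (Fin (p + 1)) R) (i : Fin p) :
    (Y.submatrix i.castSucc.succ.succAbove id).det *
        (Y.submatrix (Fin.succ ∘ Fin.castSucc) Fin.castSucc).det =
      (Y.submatrix Fin.succ id).det *
          (Y.submatrix (Fin.castSucc ∘ i.succ.succAbove) Fin.castSucc).det +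
        (Y.submatrix (Fin.succ ∘ i.castSucc.succAbove) Fin.castSucc).det *
          (Y.submatrix Fin.castSucc id).det := by
  have hcast :
      (Pi.single i.castSucc.succ 1 : Fin (p + 2) → R) ∘ Fin.castSucc = Pi.single i.succ 1 := by
    rw [Fin.succ_castSucc]
    exact Function.update_comp_eq_of_injective _ (Fin.castSucc_injective _) _ _
  have hsucc :
      (Pi.single i.castSucc.succ 1 : Fin (p + 2) → R) ∘ Fin.succ = Pi.single i.castSucc 1 :=
    Function.update_comp_eq_of_injective _ (Fin.succ_injective _) _ _
  -- Desnanot–Jacobi for `Y` with the unit column `e_s` prepended, `s = i + 1`.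
  have h := desnanot_jacobi (prependCol (Pi.single i.castSucc.succ 1) Y)
  rw [show (prependCol _ Y).submatrix (Fin.succ ∘ Fin.castSucc) (Fin.succ ∘ Fin.castSucc) =
      Y.submatrix (Fin.succ ∘ Fin.castSucc) Fin.castSucc from rfl, prependCol_submatrix_succ,
    prependCol_submatrix_succ, prependCol_submatrix_castSucc, prependCol_submatrix_castSucc,
    hcast, hsucc, det_prependCol_single, det_prependCol_single, det_prependCol_single] at h
  simp only [submatrix_submatrix, Function.comp_id, Fin.val_succ, Fin.val_castSucc, pow_succ] at h
  rcases neg_one_pow_eq_or R (i : ℕ) with hσ | hσ <;> rw [hσ] at h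
  · linear_combination -h
  · linear_combination h

section ConsecutiveFrom
variable {p n : ℕ}

def ConsecutiveFrom (a : ℕ) (f : Fin p → Fin n) : Prop :=
  ∀ i, (f i : ℕ) = a + i

variable {a : ℕ}

lemma ConsecutiveFrom.strictMono {f : Fin p → Fin n} (hf : ConsecutiveFrom a f) : StrictMono f :=
  fun i j hij => by rw [Fin.lt_def, hf, hf]; exact Nat.add_lt_add_left hij a

lemma ConsecutiveFrom.comp_castSucc {f : Fin (p + 1) → Fin n} (hf : ConsecutiveFrom a f) :
    ConsecutiveFrom a (f ∘ Fin.castSucc) :=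
  fun i => by rw [Function.comp_apply, hf, Fin.val_castSucc]

lemma ConsecutiveFrom.cons {f : Fin p → Fin n} (hf : ConsecutiveFrom (a + 1) f) (ha : a < n) :
    ConsecutiveFrom a (Fin.cons ⟨a, ha⟩ f : Fin (p + 1) → Fin n) :=
  Fin.cases (by simp) (fun i => by rw [Fin.cons_succ, hf, Fin.val_succ]; omega)

lemma consecutiveFrom_of_succ_eq {f : Fin (p + 1) → Fin n}
    (hf : ∀ i : Fin p, (f i.succ : ℕ) = f i.castSucc + 1) : ConsecutiveFrom (f 0) f :=
  Fin.induction (by simp) (fun i hi => by simp [hf, hi]; omega)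

lemma exists_gap_of_not_consecutiveFrom {f : Fin (p + 1) → Fin n} (hf : StrictMono f)
    (hcons : ¬ ConsecutiveFrom (f 0) f) : ∃ i : Fin p, (f i.castSucc : ℕ) + 1 < f i.succ := by
  by_contra! h
  exact hcons (consecutiveFrom_of_succ_eq fun i =>
    le_antisymm (h i) (hf Fin.castSucc_lt_succ))

end ConsecutiveFrom

lemma det_transpose_submatrix {R : Type*} [CommRing R] {n m p : ℕ} (X : Matrix (Fin n) (Fin m) R)
    (f : Fin p → Fin n) (g : Fin p → Fin m) : (Xᵀ.submatrix g f).det = (X.submatrix f g).det := by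
  rw [← transpose_submatrix, det_transpose]

section Positivity
variable {R : Type*} [CommRing R] [LinearOrder R] [IsStrictOrderedRing R] {n m : ℕ}

theorem consecutive_minors_pos_of_initial_minors_pos (X : Matrix (Fin n) (Fin m) R)
    (hcol : ∀ p a (f : Fin p → Fin n) (g : Fin p → Fin m), 0 < p →
      ConsecutiveFrom a f → ConsecutiveFrom 0 g → 0 < (X.submatrix f g).det)
    (hrow : ∀ p b (f : Fin p → Fin n) (g : Fin p → Fin m), 0 < p →
      ConsecutiveFrom 0 f → ConsecutiveFrom b g → 0 < (X.submatrix f g).det)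
    (p a b : ℕ) (f : Fin p → Fin n) (g : Fin p → Fin m) (hf : ConsecutiveFrom a f)
    (hg : ConsecutiveFrom b g) : 0 < (X.submatrix f g).det := by
  induction hN : a + b + p using Nat.strong_induction_on generalizing p a b with
  | _ N ih =>
  rcases p with _ | q
  · simp
  rcases a with _ | a
  · exact hrow _ b f g q.succ_pos hf hg
  rcases b with _ | b
  · exact hcol _ _ f g q.succ_pos hf hg
  -- Border the window one step up and to the left and apply Desnanot–Jacobi to the bordered one.
  have ha : a < n := by have := (f 0).isLt; rw [hf 0] at this; omega
  have hb : b < m := by have := (g 0).isLt; rw [hg 0] at this; omega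
  have hF := hf.cons ha
  have hG := hg.cons hb
  have key := desnanot_jacobi (X.submatrix (Fin.cons ⟨a, ha⟩ f) (Fin.cons ⟨b, hb⟩ g))
  simp only [submatrix_submatrix, ← Function.comp_assoc, Fin.cons_comp_succ] at key
  have hbig := ih _ (by omega) _ _ _ _ _ hF hG rfl
  have hinner := ih _ (by omega) _ _ _ _ _ hf.comp_castSucc hg.comp_castSucc rfl
  have hcorner := ih _ (by omega) _ _ _ _ _ hF.comp_castSucc hG.comp_castSucc rfl
  have hup := ih _ (by omega) _ _ _ _ _ hF.comp_castSucc hg rfl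
  have hleft := ih _ (by omega) _ _ _ _ _ hf hG.comp_castSucc rfl
  refine (pos_iff_pos_of_mul_pos (?_ : 0 < _ * (X.submatrix (Fin.cons ⟨a, ha⟩ f ∘ Fin.castSucc)
    (Fin.cons ⟨b, hb⟩ g ∘ Fin.castSucc)).det)).mpr hcorner
  linarith [mul_pos hbig hinner, mul_pos hup hleft]

theorem minors_pos_of_consecutive_rows_pos (X : Matrix (Fin n) (Fin m) R) {q : ℕ}
    (hlow : ∀ (f : Fin q → Fin n) (g : Fin q → Fin m), StrictMono f → StrictMono g →
      0 < (X.submatrix f g).det)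
    {g : Fin (q + 1) → Fin m} (hg : StrictMono g)
    (hcons : ∀ a (f : Fin (q + 1) → Fin n), ConsecutiveFrom a f → 0 < (X.submatrix f g).det)
    (f : Fin (q + 1) → Fin n) (hf : StrictMono f) : 0 < (X.submatrix f g).det := by
  induction hN : (f (Fin.last q) : ℕ) - f 0 using Nat.strong_induction_on generalizing f with
  | _ N ih =>
  by_cases hc : ConsecutiveFrom (f 0) f
  · exact hcons _ f hc
  -- Insert the skipped row `f i + 1`; dropping the first or the last row of the enlarged
  -- family then gives families of smaller spread.
  obtain ⟨i, hi⟩ := exists_gap_of_not_consecutiveFrom hf hc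
  set x : Fin n := ⟨f i.castSucc + 1, by omega⟩
  set F := Fin.insertNth (α := fun _ => Fin n) i.castSucc.succ x f
  have hF : StrictMono F := Fin.strictMono_insertNth hf i x (Nat.lt_succ_self _) hi
  have hFf : F ∘ i.castSucc.succ.succAbove = f := Fin.insertNth_comp_succAbove ..
  have hF0 : (F 0 : ℕ) = f 0 := by
    rw [← Fin.succAbove_ne_zero_zero (Fin.succ_ne_zero i.castSucc), ← hFf, Function.comp_apply]
  have hFlast : (F (Fin.last q).succ : ℕ) = f (Fin.last q) := by
    rw [Fin.succ_last,
      ← Fin.succAbove_ne_last_last (Fin.succ_castSucc i ▸ (Fin.castSucc_lt_last _).ne), ← hFf,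
      Function.comp_apply]
  have hF01 : F 0 < F (Fin.succ 0) := hF (Fin.succ_pos 0)
  have hFl : F (Fin.last q).castSucc < F (Fin.last q).succ := hF Fin.castSucc_lt_succ
  have hspread : f 0 < f (Fin.last q) := hf (Fin.lt_def.2 (by simpa using i.pos))
  have hdrop0 := ih _ (by simp only [Function.comp_apply]; omega)
    (F ∘ Fin.succ) (hF.comp Fin.strictMono_succ) rfl
  have hdropLast :=
    ih _ (by rw [Function.comp_apply, Function.comp_apply, Fin.castSucc_zero]; omega)
    (F ∘ Fin.castSucc) (hF.comp Fin.strictMono_castSucc) rfl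
  have hgc : StrictMono (g ∘ Fin.castSucc) := hg.comp Fin.strictMono_castSucc
  have hinner := hlow _ _ (hF.comp (Fin.strictMono_succ.comp Fin.strictMono_castSucc)) hgc
  have h1 := hlow _ _ (hF.comp (Fin.strictMono_castSucc.comp (Fin.strictMono_succAbove i.succ))) hgc
  have h2 := hlow _ _ (hF.comp (Fin.strictMono_succ.comp (Fin.strictMono_succAbove i.castSucc))) hgc
  have key := det_submatrix_succAbove_mul_det (X.submatrix F g) i
  simp only [submatrix_submatrix, Function.comp_id, hFf] at key
  refine (pos_iff_pos_of_mul_pos (?_ : 0 < _ * (X.submatrix (F ∘ Fin.succ ∘ Fin.castSucc)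
    (g ∘ Fin.castSucc)).det)).mpr hinner
  rw [key]
  exact add_pos (mul_pos hdrop0 h1) (mul_pos h2 hdropLast)

theorem minors_pos_of_consecutive_minors_pos (X : Matrix (Fin n) (Fin m) R)
    (hcons : ∀ p a b (f : Fin p → Fin n) (g : Fin p → Fin m), ConsecutiveFrom a f →
      ConsecutiveFrom b g → 0 < (X.submatrix f g).det)
    (p : ℕ) (f : Fin p → Fin n) (g : Fin p → Fin m) (hf : StrictMono f) (hg : StrictMono g) :
    0 < (X.submatrix f g).det := by
  induction p with
  | zero => simp
  | succ q ih =>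
    have hlowT (f' : Fin q → Fin m) (g' : Fin q → Fin n) (hf' : StrictMono f')
        (hg' : StrictMono g') : 0 < (Xᵀ.submatrix f' g').det :=
      det_transpose_submatrix X g' f' ▸ ih g' f' hg' hf'
    have hconsCols (b : ℕ) (g' : Fin (q + 1) → Fin m) (hg' : ConsecutiveFrom b g') :
        0 < (Xᵀ.submatrix g' f).det :=
      det_transpose_submatrix X f g' ▸ minors_pos_of_consecutive_rows_pos X ih
        hg'.strictMono (fun a f' hf' => hcons _ a b f' g' hf' hg') f hf
    exact det_transpose_submatrix X f g ▸
      minors_pos_of_consecutive_rows_pos Xᵀ hlowT hf hconsCols g hg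

end Positivity

/-- `X` is strictly totally positive iff all of its row-initial and
column-initial minors are positive. -/
theorem stmt6 {n m : ℕ} (X : Matrix (Fin n) (Fin m) ℝ) :
    STP X ↔
      ∀ j : ℕ, 1 ≤ j → j ≤ min n m → ∀ t : ℕ, 1 ≤ t →
        (∀ (f : Fin j → Fin n) (g : Fin j → Fin m),
          (∀ i, (f i : ℕ) = t - 1 + (i : ℕ)) → (∀ i, (g i : ℕ) = (i : ℕ)) →
          0 < (X.submatrix f g).det) ∧
        (∀ (f : Fin j → Fin n) (g : Fin j → Fin m),
          (∀ i, (f i : ℕ) = (i : ℕ)) → (∀ i, (g i : ℕ) = t - 1 + (i : ℕ)) →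
          0 < (X.submatrix f g).det) := by
  constructor
  · intro hX j _ _ t _
    have hinit (f : Fin j → Fin n) (g : Fin j → Fin m) (a b : ℕ) (hf : ConsecutiveFrom a f)
        (hg : ConsecutiveFrom b g) : 0 < (X.submatrix f g).det :=
      hX j f g hf.strictMono hg.strictMono
    exact ⟨fun f g hf hg => hinit f g _ 0 hf (by simpa [ConsecutiveFrom] using hg),
      fun f g hf hg => hinit f g 0 _ (by simpa [ConsecutiveFrom] using hf) hg⟩
  · intro h
    have hle {p : ℕ} {f : Fin p → Fin n} {g : Fin p → Fin m} {a b : ℕ} (hf : ConsecutiveFrom a f)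
        (hg : ConsecutiveFrom b g) : p ≤ min n m :=
      le_min (Fin.le_of_injective f hf.strictMono.injective)
        (Fin.le_of_injective g hg.strictMono.injective)
    refine minors_pos_of_consecutive_minors_pos X
      (consecutive_minors_pos_of_initial_minors_pos X ?_ ?_)
    · intro p a f g hp hf hg
      exact (h p hp (hle hf hg) (a + 1) (by omega)).1 f g (by simpa [ConsecutiveFrom] using hf)
        (by simpa [ConsecutiveFrom] using hg)
    · intro p b f g hp hf hg
      exact (h p hp (hle hf hg) (b + 1) (by omega)).2 f g (by simpa [ConsecutiveFrom] using hf)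
        (by simpa [ConsecutiveFrom] using hg)
end

section
/- Let X be a real n×m matrix with n ≥ 2m and suppose there exists ε ∈ {−1,+1} such that: ε·det(X_{α,(1:m)}) > 0 for all α = {1,…,m−r} ∪ {t,…,t+r−1} with 1 ≤ r < m and m−r+1 ≤ t ≤ n−r+1, and for all α = {t,…,t+m−1} with 1 ≤ t ≤ m; and ε·det(X_{α,(1:m)}) ≥ 0 for all α = {t,…,t+m−1} with m+1 ≤ t ≤ n−m+1. Then X is m-sign consistent. -/
open Matrix Polynomial Filter

/-!
Let `B` be the leading `m × m` block of `X`. Its determinant is a window minor of strict sign, so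
`Y = X B⁻¹` exists, its minors on all columns are those of `X` divided by `det B`, and its top
block is the identity. Expanding along row `0`, a minor of `Y` whose rows include `0` is a minor
of `Y` with first row and column deleted, and the staircase minors of that matrix are staircase
minors of `Y`; by induction on `m`, all these minors are positive. If an increasing row tuple
`f₀ < ⋯ < f_ν` skips a row, let `g` consist of `f₁, …, f_{ν-1}` and one skipped row. In the
three-term Plücker relation
  `Y[0,g] Y[f] = Y[0,f₁..f_ν] Y[f₀,g] + Y[0,f₀..f_{ν-1}] Y[g,f_ν]`
the coefficients are positive when `f₀ > 0`, and `(f₀, g)` and `(g, f_ν)` have smaller spread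
`f_ν - f₀`. Induction on the spread thus reduces the sign of every minor to that of the
contiguous windows.
-/

namespace StaircaseMinors

variable {ν : ℕ}

section Determinants

variable {R : Type*} [CommRing R]

def cofactors (G : Fin ν → Fin (ν + 1) → R) (j : Fin (ν + 1)) : R :=
  (-1) ^ (j : ℕ) * (of fun r s => G r (j.succAbove s)).det

theorem det_cons_eq_dotProduct_cofactors (v : Fin (ν + 1) → R) (G : Fin ν → Fin (ν + 1) → R) :
    (of (Fin.cons v G)).det = v ⬝ᵥ cofactors G := by
  rw [det_succ_row_zero, dotProduct]
  refine Finset.sum_congr rfl fun j _ => ?_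
  have : (of (Fin.cons v G)).submatrix Fin.succ j.succAbove =
      of fun r s => G r (j.succAbove s) := by
    ext r s
    simp
  rw [this, cofactors, of_apply, Fin.cons_zero]
  ring

theorem det_snoc_eq_dotProduct_cofactors (v : Fin (ν + 1) → R) (G : Fin ν → Fin (ν + 1) → R) :
    (of (Fin.snoc G v)).det = (-1) ^ ν * (v ⬝ᵥ cofactors G) := by
  rw [det_succ_row _ (Fin.last ν), dotProduct, Finset.mul_sum]
  refine Finset.sum_congr rfl fun j _ => ?_
  have : (of (Fin.snoc G v)).submatrix (Fin.last ν).succAbove j.succAbove =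
      of fun r s => G r (j.succAbove s) := by
    ext r s
    simp [Fin.succAbove_last]
  rw [this, cofactors, of_apply, Fin.snoc_last, Fin.val_last, pow_add]
  ring

/-- The Grassmann–Plücker relation, in the form of a Laplace expansion along the last column of
the singular matrix `[a | a c]`. -/
theorem sum_neg_one_pow_mul_dotProduct_mul_det_succAbove_eq_zero (c : Fin (ν + 1) → R)
    (a : Fin (ν + 2) → Fin (ν + 1) → R) :
    ∑ i : Fin (ν + 2), (-1 : R) ^ (i : ℕ) * (a i ⬝ᵥ c) * (of (a ∘ i.succAbove)).det = 0 := by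
  set A : Matrix (Fin (ν + 2)) (Fin (ν + 2)) R := of fun i => Fin.snoc (a i) 0
  set M := A.updateCol (Fin.last _) fun k => ∑ j, (Fin.snoc c 0 : Fin (ν + 2) → R) j • A k j
  have hM : M.det = 0 := by
    rw [det_updateCol_sum]
    simp
  have hterm (i : Fin (ν + 2)) :
      (-1 : R) ^ ((i : ℕ) + (Fin.last (ν + 1) : ℕ)) * M i (Fin.last _) *
        (M.submatrix i.succAbove (Fin.last _).succAbove).det =
      (-1) ^ (ν + 1) * ((-1 : R) ^ (i : ℕ) * (a i ⬝ᵥ c) * (of (a ∘ i.succAbove)).det) := by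
    have hcol : M i (Fin.last _) = a i ⬝ᵥ c := by
      simp [M, A, Fin.sum_univ_castSucc, dotProduct, mul_comm]
    have hsub : M.submatrix i.succAbove (Fin.last _).succAbove = of (a ∘ i.succAbove) := by
      ext r s
      simp [M, A, Fin.succAbove_last, Fin.castSucc_ne_last]
    rw [hcol, hsub, Fin.val_last, pow_add]
    ring
  rw [det_succ_column M (Fin.last _)] at hM
  simp_rw [hterm, ← Finset.mul_sum] at hM
  exact (isUnit_neg_one.pow _).mul_right_eq_zero.mp hM

def minor (Z : Matrix ℕ ℕ R) {μ : ℕ} (f : Fin μ → ℕ) : R :=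
  (Z.submatrix f Fin.val).det

theorem minor_cons_eq_zero_of_mem_range (Z : Matrix ℕ ℕ R) {y : ℕ} {g : Fin ν → ℕ}
    (hy : y ∈ Set.range g) : minor Z (Fin.cons y g) = 0 := by
  obtain ⟨k, rfl⟩ := hy
  exact det_zero_of_row_eq (i := 0) (j := k.succ) (Fin.succ_ne_zero k).symm
    (funext fun s => by simp)

/-- The terms of the Grassmann–Plücker relation for the rows `x, f₀, …, f_ν` against `g` that
belong to the interior rows of `f` vanish, since these rows occur in `g`. -/
theorem minor_cons_mul_minor (Z : Matrix ℕ ℕ R) (hν : ν ≠ 0) (x : ℕ) (f : Fin (ν + 1) → ℕ)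
    (g : Fin ν → ℕ) (hg : ∀ j, j ≠ 0 → j ≠ Fin.last ν → f j ∈ Set.range g) :
    minor Z (Fin.cons x g) * minor Z f =
      minor Z (Fin.cons x (f ∘ Fin.succ)) * minor Z (Fin.cons (f 0) g) +
      minor Z (Fin.cons x (f ∘ Fin.castSucc)) * minor Z (Fin.snoc g (f (Fin.last ν))) := by
  set row : ℕ → Fin (ν + 1) → R := fun t j => Z t j
  set a : Fin (ν + 2) → Fin (ν + 1) → R := Fin.cons (row x) (row ∘ f)
  have hminor (h : Fin (ν + 1) → ℕ) : minor Z h = (of (row ∘ h)).det := rfl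
  have hcons (y : ℕ) : minor Z (Fin.cons y g) = row y ⬝ᵥ cofactors (row ∘ g) := by
    rw [hminor, Fin.comp_cons, det_cons_eq_dotProduct_cofactors]
  have hsnoc (y : ℕ) :
      minor Z (Fin.snoc g y) = (-1) ^ ν * (row y ⬝ᵥ cofactors (row ∘ g)) := by
    rw [hminor, Fin.comp_snoc, det_snoc_eq_dotProduct_cofactors]
  have hterm (j : Fin (ν + 1)) :
      (-1 : R) ^ (j.succ : ℕ) * (a j.succ ⬝ᵥ cofactors (row ∘ g)) *
        (of (a ∘ j.succ.succAbove)).det =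
      -((-1) ^ (j : ℕ) * minor Z (Fin.cons (f j) g) * minor Z (Fin.cons x (f ∘ j.succAbove))) := by
    rw [Fin.cons_comp_succ_succAbove,
      show j.removeNth (row ∘ f) = row ∘ (f ∘ j.succAbove) from rfl, hcons, hminor, Fin.comp_cons]
    simp only [a, Fin.cons_succ, Fin.val_succ, pow_succ, Function.comp_apply]
    ring
  have hmid (j : Fin (ν + 1)) (hj : j ≠ 0 ∧ j ≠ Fin.last ν) :
      -((-1 : R) ^ (j : ℕ) * minor Z (Fin.cons (f j) g) *
        minor Z (Fin.cons x (f ∘ j.succAbove))) = 0 := by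
    simp [minor_cons_eq_zero_of_mem_range Z (hg j hj.1 hj.2)]
  have hlast : (Fin.last ν : Fin (ν + 1)) ≠ 0 := by simpa [Fin.ext_iff] using hν
  have key := sum_neg_one_pow_mul_dotProduct_mul_det_succAbove_eq_zero (cofactors (row ∘ g)) a
  rw [Fin.sum_univ_succ, Finset.sum_congr rfl fun j _ => hterm j,
    Fintype.sum_eq_add 0 (Fin.last ν) hlast.symm hmid] at key
  simp only [a, Fin.succAbove_zero, Fin.succAbove_last, Fin.val_zero, pow_zero, one_mul,
    Fin.cons_zero, Fin.val_last, hcons] at key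
  rw [show Fin.cons (row x) (row ∘ f) ∘ Fin.succ = row ∘ f from rfl] at key
  rw [hsnoc, hcons, hcons, hminor f]
  linear_combination key

theorem minor_cons_zero_add_one (Z : Matrix ℕ ℕ R)
    (hZ : Z.submatrix Fin.val Fin.val = (1 : Matrix (Fin (ν + 1)) (Fin (ν + 1)) R))
    (σ : Fin ν → ℕ) :
    minor Z (Fin.cons 0 fun k => σ k + 1) = minor (Z.submatrix (· + 1) (· + 1)) σ := by
  have hrow (j : Fin (ν + 1)) : Z.submatrix (Fin.cons 0 fun k => σ k + 1) Fin.val 0 j =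
      (1 : Matrix (Fin (ν + 1)) (Fin (ν + 1)) R) 0 j :=
    congrFun (congrFun hZ 0) j
  rw [minor, det_succ_row_zero, Fin.sum_univ_succ, Finset.sum_eq_zero fun j _ => by
    rw [hrow, one_apply_ne (Fin.succ_ne_zero j).symm, mul_zero, zero_mul], add_zero, hrow,
    one_apply_eq]
  simp only [Fin.val_zero, pow_zero, mul_one, one_mul, Fin.succAbove_zero]
  rfl

theorem submatrix_add_one_submatrix_val_eq_one {Z : Matrix ℕ ℕ R}
    (hZ : Z.submatrix Fin.val Fin.val = (1 : Matrix (Fin (ν + 1)) (Fin (ν + 1)) R)) :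
    (Z.submatrix (· + 1) (· + 1)).submatrix Fin.val Fin.val = (1 : Matrix (Fin ν) (Fin ν) R) := by
  simpa [submatrix_one _ (Fin.succ_injective _), Function.comp_def] using
    congrArg (fun M => M.submatrix Fin.succ Fin.succ) hZ

end Determinants

section Tuples

def window (μ t : ℕ) : Fin μ → ℕ := fun i => t + i

theorem strictMono_snoc {α : Type*} [Preorder α] {g : Fin ν → α} {x : α} (hg : StrictMono g)
    (hx : ∀ k, g k < x) : StrictMono (Fin.snoc g x : Fin (ν + 1) → α) := by
  intro i j hij
  induction j using Fin.lastCases with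
  | last =>
    induction i using Fin.lastCases with
    | last => exact absurd hij (lt_irrefl _)
    | cast k => simpa using hx k
  | cast l =>
    induction i using Fin.lastCases with
    | last => exact absurd hij (not_lt.2 (Fin.le_last _))
    | cast k => simpa using hg (Fin.castSucc_lt_castSucc_iff.1 hij)

theorem eq_window_of_forall_succ_le {f : Fin (ν + 1) → ℕ} (hf : StrictMono f)
    (h : ∀ i : Fin ν, f i.succ ≤ f i.castSucc + 1) : f = window (ν + 1) (f 0) := by
  funext i
  induction i using Fin.induction with
  | zero => simp [window]
  | succ i ih =>
    have := hf (Fin.castSucc_lt_succ (i := i))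
    have := h i
    simp only [window, Fin.val_castSucc] at ih
    simp only [window, Fin.val_succ]
    omega

theorem exists_strictMono_between_of_gap {f : Fin (ν + 1) → ℕ} (hf : StrictMono f) {p : Fin ν}
    (hp : f p.castSucc + 1 < f p.succ) :
    ∃ g : Fin ν → ℕ, StrictMono g ∧ (∀ k, f 0 < g k ∧ g k < f (Fin.last ν)) ∧
      ∀ j, j ≠ 0 → j ≠ Fin.last ν → f j ∈ Set.range g := by
  classical
  set w := f p.castSucc + 1
  set T := insert w (((Finset.univ.image f).erase (f 0)).erase (f (Fin.last ν)))
  have hlast : Fin.last ν ≠ 0 := by simp [Fin.ext_iff, p.pos.ne']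
  have hw : w ∉ Set.range f := by
    rintro ⟨j, hj⟩
    have h1 : p.castSucc < j := hf.lt_iff_lt.1 (by omega)
    have h2 : j < p.succ := hf.lt_iff_lt.1 (by omega)
    exact absurd (Fin.castSucc_lt_iff_succ_le.1 h1) (not_le.2 h2)
  have hcard : T.card = ν := by
    rw [Finset.card_insert_of_notMem, Finset.card_erase_of_mem, Finset.card_erase_of_mem,
      Finset.card_image_of_injective _ hf.injective, Finset.card_univ, Fintype.card_fin]
    · omega
    · simp
    · simpa [hf.injective.eq_iff] using hlast
    · simp only [Finset.mem_erase, Finset.mem_image]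
      exact fun ⟨_, _, j, _, hj⟩ => hw ⟨j, hj⟩
  have hT : ∀ x ∈ T, f 0 < x ∧ x < f (Fin.last ν) := by
    intro x hx
    simp only [T, Finset.mem_insert, Finset.mem_erase, Finset.mem_image, Finset.mem_univ,
      true_and] at hx
    rcases hx with rfl | ⟨hl, h0, j, rfl⟩
    · exact ⟨(hf.monotone (Fin.zero_le _)).trans_lt (Nat.lt_succ_self _),
        hp.trans_le (hf.monotone (Fin.le_last _))⟩
    · exact ⟨hf ((Fin.pos_iff_ne_zero' _).2 fun h => h0 (by rw [h])),
        hf (Fin.lt_last_iff_ne_last.2 fun h => hl (by rw [h]))⟩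
  refine ⟨T.orderEmbOfFin hcard, (T.orderEmbOfFin hcard).strictMono,
    fun k => hT _ (T.orderEmbOfFin_mem hcard k), fun j h0 hl => ?_⟩
  rw [Finset.range_orderEmbOfFin]
  simp [T, hf.injective.eq_iff, h0, hl]

end Tuples

theorem pos_of_mul_eq_add_mul {x a b p q r : ℝ} (hp : 0 < p) (hq : 0 < q) (hr : 0 < r)
    (h : p * x = q * a + r * b) (ha : 0 < a) (hb : 0 < b) : 0 < x :=
  (pos_iff_pos_of_mul_pos (h ▸ by positivity)).mp hp

theorem nonneg_of_mul_eq_add_mul {x a b p q r : ℝ} (hp : 0 < p) (hq : 0 < q) (hr : 0 < r)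
    (h : p * x = q * a + r * b) (ha : 0 ≤ a) (hb : 0 ≤ b) : 0 ≤ x :=
  nonneg_of_mul_nonneg_right (h ▸ by positivity) hp

/-- `S` is `Set.Ioi 0` or `Set.Ici 0`, so that strict and weak sign conditions are handled at
once. -/
theorem minor_mem_of_window_mem {N : ℕ} {Z : Matrix ℕ ℕ ℝ} {S : Set ℝ} (hS : Set.Ioi 0 ⊆ S)
    (hcomb : ∀ ⦃x a b p q r : ℝ⦄, 0 < p → 0 < q → 0 < r → p * x = q * a + r * b →
      a ∈ S → b ∈ S → x ∈ S)
    (hzero : ∀ β : Fin ν → ℕ, StrictMono β → (∀ k, 0 < β k) → (∀ k, β k < N) →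
      0 < minor Z (Fin.cons 0 β))
    (hwin : ∀ t, t + (ν + 1) ≤ N → minor Z (window (ν + 1) t) ∈ S)
    (f : Fin (ν + 1) → ℕ) (hf : StrictMono f) (hfN : ∀ i, f i < N) : minor Z f ∈ S := by
  induction hd : f (Fin.last ν) - f 0 using Nat.strong_induction_on generalizing f with
  | _ d IH =>
  rcases (f 0).eq_zero_or_pos with h0 | h0
  · rw [← Fin.cons_self_tail f, h0]
    exact hS (hzero _ (hf.comp Fin.strictMono_succ) (fun k => h0 ▸ hf (Fin.succ_pos k))
      fun k => hfN _)
  by_cases hgap : ∃ p : Fin ν, f p.castSucc + 1 < f p.succ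
  swap
  · simp only [not_exists, not_lt] at hgap
    have hfw := eq_window_of_forall_succ_le hf hgap
    have hlast := hfN (Fin.last ν)
    rw [hfw] at hlast ⊢
    exact hwin _ (by simp only [window, Fin.val_last] at hlast; omega)
  obtain ⟨p, hp⟩ := hgap
  obtain ⟨g, hg, hgf, hmid⟩ := exists_strictMono_between_of_gap hf hp
  have hspan : f 0 < f (Fin.last ν) := (hgf p).1.trans (hgf p).2
  have hA : StrictMono (Fin.cons (f 0) g : Fin (ν + 1) → ℕ) :=
    Fin.strictMono_cons.2 ⟨fun k => (hgf k).1, hg⟩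
  have hB : StrictMono (Fin.snoc g (f (Fin.last ν)) : Fin (ν + 1) → ℕ) :=
    strictMono_snoc hg fun k => (hgf k).2
  have hAlt : ∀ i, (Fin.cons (f 0) g : Fin (ν + 1) → ℕ) i < f (Fin.last ν) :=
    Fin.cases hspan fun k => (hgf k).2
  have hBgt : ∀ i, f 0 < (Fin.snoc g (f (Fin.last ν)) : Fin (ν + 1) → ℕ) i :=
    Fin.lastCases (by simpa using hspan) fun k => by simpa using (hgf k).1
  refine hcomb (hzero g hg (fun k => (Nat.zero_le _).trans_lt (hgf k).1)
      fun k => (hgf k).2.trans (hfN _))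
    (hzero _ (hf.comp Fin.strictMono_succ)
      (fun k => (Nat.zero_le _).trans_lt (hf (Fin.succ_pos k))) fun k => hfN _)
    (hzero _ (hf.comp Fin.strictMono_castSucc)
      (fun k => h0.trans_le (hf.monotone (Fin.zero_le _))) fun k => hfN _)
    (minor_cons_mul_minor Z p.pos.ne' 0 f g hmid)
    (IH _ ?_ _ hA (fun i => (hAlt i).trans (hfN _)) rfl)
    (IH _ ?_ _ hB (fun i => ?_) rfl)
  · have := hAlt (Fin.last ν)
    rw [Fin.cons_zero]
    omega
  · have := hBgt 0
    rw [Fin.snoc_last]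
    omega
  · exact ((hB.monotone (Fin.le_last i)).trans_eq (Fin.snoc_last _ _)).trans_lt (hfN _)

section Staircase

/-- The rows `0, …, μ - r - 1, t, …, t + r - 1`, counted from `0` (for `μ - r ≤ t`). -/
def stair (μ r t : ℕ) : Fin μ → ℕ := fun i => if (i : ℕ) < μ - r then i else t + i - (μ - r)

theorem cons_zero_stair_add_one {μ r t : ℕ} (hr : r ≤ μ) :
    (Fin.cons 0 fun k => stair μ r t k + 1 : Fin (μ + 1) → ℕ) = stair (μ + 1) r (t + 1) := by
  funext i
  induction i using Fin.cases with
  | zero => simp [stair]; omega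
  | succ k => simp only [stair, Fin.cons_succ, Fin.val_succ]; split_ifs <;> omega

theorem stair_self (μ t : ℕ) : stair μ μ t = window μ t := by
  funext i
  simp [stair, window]

def StaircaseMinorsPos (Z : Matrix ℕ ℕ ℝ) (μ N : ℕ) : Prop :=
  ∀ r t, 0 < r → r < μ → μ - r ≤ t → t + r ≤ N → 0 < minor Z (stair μ r t)

variable {μ N : ℕ} {Z : Matrix ℕ ℕ ℝ}

section Shift

variable (hZ : Z.submatrix Fin.val Fin.val = (1 : Matrix (Fin (μ + 1)) (Fin (μ + 1)) ℝ))
include hZ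

theorem minor_submatrix_add_one_stair {r t : ℕ} (hr : r ≤ μ) :
    minor (Z.submatrix (· + 1) (· + 1)) (stair μ r t) = minor Z (stair (μ + 1) r (t + 1)) := by
  rw [← minor_cons_zero_add_one Z hZ, cons_zero_stair_add_one hr]

theorem StaircaseMinorsPos.submatrix_add_one (h : StaircaseMinorsPos Z (μ + 1) N) :
    StaircaseMinorsPos (Z.submatrix (· + 1) (· + 1)) μ (N - 1) := by
  intro r t hr hrμ ht htN
  rw [minor_submatrix_add_one_stair hZ hrμ.le]
  exact h r (t + 1) hr (by omega) (by omega) (by omega)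

theorem StaircaseMinorsPos.window_submatrix_add_one (h : StaircaseMinorsPos Z (μ + 1) N)
    {t : ℕ} (ht : t + μ ≤ N - 1) : 0 < minor (Z.submatrix (· + 1) (· + 1)) (window μ t) := by
  rcases μ.eq_zero_or_pos with rfl | hμ
  · simp [minor]
  rw [← stair_self, minor_submatrix_add_one_stair hZ le_rfl]
  exact h μ (t + 1) hμ (by omega) (by omega) (by omega)

end Shift

theorem StaircaseMinorsPos.minor_mem {S : Set ℝ} (hS : Set.Ioi 0 ⊆ S)
    (hcomb : ∀ ⦃x a b p q r : ℝ⦄, 0 < p → 0 < q → 0 < r → p * x = q * a + r * b →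
      a ∈ S → b ∈ S → x ∈ S)
    (hZ : Z.submatrix Fin.val Fin.val = (1 : Matrix (Fin μ) (Fin μ) ℝ))
    (hstair : StaircaseMinorsPos Z μ N) (hwin : ∀ t, t + μ ≤ N → minor Z (window μ t) ∈ S)
    (f : Fin μ → ℕ) (hf : StrictMono f) (hfN : ∀ i, f i < N) : minor Z f ∈ S := by
  induction μ generalizing N Z S with
  | zero => exact hS (by simp [minor])
  | succ ν ih =>
    refine minor_mem_of_window_mem hS hcomb (fun β hβ hβ0 hβN => ?_) hwin f hf hfN
    have hβ1 : β = fun k => (β k - 1) + 1 := funext fun k => (Nat.sub_add_cancel (hβ0 k)).symm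
    rw [hβ1, minor_cons_zero_add_one Z hZ]
    refine ih subset_rfl (fun _ _ _ _ _ _ => pos_of_mul_eq_add_mul)
      (submatrix_add_one_submatrix_val_eq_one hZ) (hstair.submatrix_add_one hZ)
      (fun t ht => hstair.window_submatrix_add_one hZ ht) _ (fun a b hab => ?_) fun k => ?_
    · have := hβ hab
      have := hβ0 a
      omega
    · have := hβN k
      have := hβ0 k
      omega

end Staircase

def extendByZero {n m : ℕ} (Y : Matrix (Fin n) (Fin m) ℝ) : Matrix ℕ ℕ ℝ :=
  of fun i j => if h : i < n ∧ j < m then Y ⟨i, h.1⟩ ⟨j, h.2⟩ else 0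

theorem extendByZero_submatrix {n m : ℕ} {ι : Type*} (Y : Matrix (Fin n) (Fin m) ℝ)
    (F : ι → Fin n) : (extendByZero Y).submatrix (fun i => F i) Fin.val = Y.submatrix F id := by
  ext i j
  simp [extendByZero]

theorem minor_extendByZero_mul_inv {n m : ℕ} (X : Matrix (Fin n) (Fin m) ℝ)
    (B : Matrix (Fin m) (Fin m) ℝ) (F : Fin m → Fin n) :
    minor (extendByZero (X * B⁻¹)) (fun i => F i) = (X.submatrix F id).det / B.det := by
  rw [minor, extendByZero_submatrix, submatrix_mul _ _ _ id _ Function.bijective_id,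
    submatrix_id_id, det_mul, det_nonsing_inv, Ring.inverse_eq_inv', div_eq_mul_inv]

theorem mul_det_nonneg_of_staircase {n m : ℕ} (X : Matrix (Fin n) (Fin m) ℝ) (hmn : m ≤ n)
    {ε : ℝ} (hB : 0 < ε * (X.submatrix (Fin.castLE hmn) id).det)
    (hstair : ∀ r t, 0 < r → r < m → m - r ≤ t → t + r ≤ n → ∀ F : Fin m → Fin n,
      (∀ i, (F i : ℕ) = stair m r t i) → 0 < ε * (X.submatrix F id).det)
    (hwin : ∀ t, t + m ≤ n → ∀ F : Fin m → Fin n, (∀ i, (F i : ℕ) = t + i) →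
      0 ≤ ε * (X.submatrix F id).det)
    (F : Fin m → Fin n) (hF : StrictMono F) : 0 ≤ ε * (X.submatrix F id).det := by
  set B := X.submatrix (Fin.castLE hmn) id
  set Z := extendByZero (X * B⁻¹)
  have hZ (F : Fin m → Fin n) :
      minor Z (fun i => F i) = ε * (X.submatrix F id).det / (ε * B.det) := by
    rw [minor_extendByZero_mul_inv, mul_div_mul_left _ _ (left_ne_zero_of_mul hB.ne')]
  have hI : Z.submatrix Fin.val Fin.val = (1 : Matrix (Fin m) (Fin m) ℝ) :=
    calc Z.submatrix Fin.val Fin.val = (X * B⁻¹).submatrix (Fin.castLE hmn) id :=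
          extendByZero_submatrix (X * B⁻¹) (Fin.castLE hmn)
      _ = B * B⁻¹ := by rw [submatrix_mul _ _ _ id _ Function.bijective_id, submatrix_id_id]
      _ = 1 := mul_nonsing_inv B (isUnit_iff_ne_zero.2 (right_ne_zero_of_mul hB.ne'))
  have hZS : StaircaseMinorsPos Z m n := by
    intro r t hr hrm ht htn
    have hlt (i : Fin m) : stair m r t i < n := by
      simp only [stair]
      split_ifs <;> omega
    show 0 < minor Z fun i => ((⟨stair m r t i, hlt i⟩ : Fin n) : ℕ)
    rw [hZ]
    exact div_pos (hstair r t hr hrm ht htn _ fun i => rfl) hB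
  have hZW (t : ℕ) (ht : t + m ≤ n) : minor Z (window m t) ∈ Set.Ici 0 := by
    show 0 ≤ minor Z fun i => ((⟨t + i, by omega⟩ : Fin n) : ℕ)
    rw [hZ]
    exact div_nonneg (hwin t ht _ fun i => rfl) hB.le
  have key := hZS.minor_mem Set.Ioi_subset_Ici_self
    (fun _ _ _ _ _ _ => nonneg_of_mul_eq_add_mul) hI hZW (fun i => F i) (fun a b h => hF h)
    fun i => (F i).isLt
  rw [Set.mem_Ici, hZ] at key
  simpa [div_mul_cancel₀ _ hB.ne'] using mul_nonneg key hB.le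

theorem sc_of_forall_mul_det_nonneg {n m : ℕ} {X : Matrix (Fin n) (Fin m) ℝ} {ε : ℝ}
    (hε : ε ≠ 0) (h : ∀ F : Fin m → Fin n, StrictMono F → 0 ≤ ε * (X.submatrix F id).det) :
    SC X m := by
  rcases hε.lt_or_gt with hneg | hpos
  · exact Or.inr fun f g hf hg => hg.eq_id ▸ nonpos_of_mul_nonneg_right (h f hf) hneg
  · exact Or.inl fun f g hf hg => hg.eq_id ▸ nonneg_of_mul_nonneg_right (h f hf) hpos

end StaircaseMinors

open StaircaseMinors

/-- for `n ≥ 2m`, the given sign pattern on the staircase row sets with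
full column set implies that `X` is `m`-sign consistent. -/
theorem stmt8 {n m : ℕ} (X : Matrix (Fin n) (Fin m) ℝ) (h2m : 2 * m ≤ n)
    (hcond : ∃ ε : ℝ, (ε = 1 ∨ ε = -1) ∧
      (∀ r ∈ Finset.Ico 1 m, ∀ t ∈ Finset.Icc (m - r + 1) (n - r + 1),
        ∀ f : Fin m → Fin n,
          (∀ i, (f i : ℕ) =
            if (i : ℕ) < m - r then (i : ℕ) else (i : ℕ) + t - 1 - (m - r)) →
          0 < ε * (X.submatrix f id).det) ∧
      (∀ t ∈ Finset.Icc 1 m, ∀ f : Fin m → Fin n,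
          (∀ i, (f i : ℕ) = t - 1 + (i : ℕ)) →
          0 < ε * (X.submatrix f id).det) ∧
      (∀ t ∈ Finset.Icc (m + 1) (n - m + 1), ∀ f : Fin m → Fin n,
          (∀ i, (f i : ℕ) = t - 1 + (i : ℕ)) →
          0 ≤ ε * (X.submatrix f id).det)) :
    SC X m := by
  obtain ⟨ε, hε, hstair, hlow, hhigh⟩ := hcond
  rcases m.eq_zero_or_pos with rfl | hm
  · exact Or.inl fun f g _ _ => by simp
  have hmn : m ≤ n := by omega
  have hε0 : ε ≠ 0 := by rcases hε with rfl | rfl <;> norm_num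
  refine sc_of_forall_mul_det_nonneg hε0 (mul_det_nonneg_of_staircase X hmn ?_ ?_ ?_)
  · exact hlow 1 (Finset.mem_Icc.2 ⟨le_rfl, hm⟩) _ fun i => by simp
  · intro r t hr hrm ht htn F hF
    refine hstair r (Finset.mem_Ico.2 ⟨hr, hrm⟩) (t + 1) (Finset.mem_Icc.2 ⟨by omega, by omega⟩)
      F fun i => ?_
    rw [hF]
    simp only [stair]
    split_ifs <;> omega
  · intro t ht F hF
    rcases lt_or_ge t m with htm | htm
    · exact (hlow (t + 1) (Finset.mem_Icc.2 ⟨by omega, by omega⟩) F fun i => by rw [hF]; omega).le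
    · exact hhigh (t + 1) (Finset.mem_Icc.2 ⟨by omega, by omega⟩) F fun i => by rw [hF]; omega
end

section
/- Let σ > 0 and let T(σ) be the n×n real matrix with entries T(σ)_{ij} = e^{−σ(i−j)²}. Let X be a real n×m matrix with m ≤ n and let k ≤ m. If X is k-sign consistent and every k columns of X are linearly independent, then T(σ)·X is strictly k-sign consistent. -/
open Matrix Polynomial Filter

/-!
By Cauchy–Binet, every `k × k` minor of `T(σ) X` is `∑_S det T(σ)[I, S] · det X[S, J]` over the
increasing `k`-tuples `S` of rows. Since `e^{-σ(i-j)²} = e^{-σi²} e^{-σj²} (e^{2σi})^j`, the minors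
of `T(σ)` are positive multiples of generalized Vandermonde determinants `det (z_a ^ e_b)` with
`0 < z` and `e` strictly increasing. These are positive: by Descartes' rule of signs they never
vanish, and expanding along the last row shows that, as a function of the last node, such a
determinant is a polynomial with positive leading coefficient and no root to the right of the
other nodes. The minors `det X[S, J]` all have the same sign, and by the Gram identity
`det (Y Yᵀ) = ∑_S (det Y[·, S])²` linear independence of the columns `J` makes one of them nonzero,
so the sum has that sign strictly.
-/

open Finset

namespace Polynomial

theorem signVariations_lt_card_support {R : Type*} [Semiring R] [LinearOrder R] {P : R[X]}
    (hP : P ≠ 0) : P.signVariations < #P.support := by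
  induction h : #P.support generalizing P with
  | zero => exact absurd (card_support_eq_zero.mp h) hP
  | succ s ih =>
    by_cases hE : P.eraseLead = 0
    · have hmon : P = monomial P.natDegree P.leadingCoeff := by
        simpa [hE] using (eraseLead_add_monomial_natDegree_leadingCoeff P).symm
      rw [hmon, signVariations_monomial]
      omega
    · have := ih hE (card_support_eraseLead' h)
      have := signVariations_le_eraseLead_succ P
      omega

theorem card_lt_card_support_of_pos_isRoot {R : Type*} [CommRing R] [LinearOrder R]
    [IsStrictOrderedRing R] {P : R[X]} (hP : P ≠ 0) {s : Finset R}
    (hs : ∀ x ∈ s, 0 < x ∧ P.IsRoot x) : #s < #P.support :=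
  calc #s ≤ #(P.roots.filter (0 < ·)).toFinset :=
        card_le_card fun x hx => by simpa [hP] using (hs x hx).symm
    _ ≤ Multiset.card (P.roots.filter (0 < ·)) := Multiset.toFinset_card_le _
    _ = P.roots.countP (0 < ·) := (Multiset.countP_eq_card_filter _ _).symm
    _ ≤ P.signVariations := roots_countP_pos_le_signVariations P
    _ < #P.support := signVariations_lt_card_support hP

theorem eventually_pos_of_leadingCoeff_pos {P : ℝ[X]} (h : 0 < P.leadingCoeff) :
    ∀ᶠ x in atTop, 0 < P.eval x := by
  by_cases hdeg : 0 < P.degree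
  · exact (tendsto_atTop_of_leadingCoeff_nonneg P hdeg h.le).eventually_gt_atTop 0
  · rw [eq_C_of_degree_le_zero (not_lt.mp hdeg)] at h ⊢
    exact Eventually.of_forall fun _ => by simpa using h

section SumMonomial

variable {R : Type*} {k : ℕ}

theorem card_support_sum_monomial_le [Semiring R] (e : Fin k → ℕ) (c : Fin k → R) :
    #(∑ j, monomial (e j) (c j)).support ≤ k :=
  calc #(∑ j, monomial (e j) (c j)).support ≤ #(univ.image e) := by
        refine card_le_card fun d hd => ?_
        rw [mem_support_iff, finsetSum_coeff] at hd
        obtain ⟨j, -, hj⟩ := exists_ne_zero_of_sum_ne_zero hd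
        rw [coeff_monomial] at hj
        split_ifs at hj with hjd
        · exact hjd ▸ mem_image_of_mem e (mem_univ j)
        · exact absurd rfl hj
    _ ≤ k := card_image_le.trans_eq (card_fin k)

theorem coeff_sum_monomial [Semiring R] {e : Fin k → ℕ} (c : Fin k → R)
    (he : Function.Injective e) (i : Fin k) : (∑ j, monomial (e j) (c j)).coeff (e i) = c i := by
  rw [finsetSum_coeff, Finset.sum_eq_single i]
  · exact coeff_monomial_same _ _
  · exact fun j _ hji => coeff_monomial_of_ne _ (he.ne hji).symm
  · simp

theorem eval_sum_monomial [CommSemiring R] (e : Fin k → ℕ) (c : Fin k → R) (t : R) :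
    (∑ j, monomial (e j) (c j)).eval t = ∑ j, c j * t ^ e j := by
  simp [eval_finsetSum]

theorem leadingCoeff_sum_monomial [Semiring R] {e : Fin (k + 1) → ℕ} (he : StrictMono e)
    (c : Fin (k + 1) → R) (hc : c (Fin.last k) ≠ 0) :
    (∑ j, monomial (e j) (c j)).leadingCoeff = c (Fin.last k) := by
  have hcoeff := coeff_sum_monomial c he.injective (Fin.last k)
  rwa [leadingCoeff, natDegree_eq_of_le_of_coeff_ne_zero _ (hcoeff ▸ hc)]
  exact natDegree_sum_le_of_forall_le _ _ fun j _ =>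
    (natDegree_monomial_le _).trans (he.monotone (Fin.le_last j))

end SumMonomial

end Polynomial

namespace Fin

open Equiv

theorem strictMono_snoc_init {α : Type*} [Preorder α] {k : ℕ} {z : Fin (k + 1) → α}
    (hz : StrictMono z) {t : α} (ht : z (Fin.last k) ≤ t) :
    StrictMono (Fin.snoc (Fin.init z) t : Fin (k + 1) → α) := by
  intro i j hij
  induction j using Fin.lastCases with
  | last =>
    induction i using Fin.lastCases with
    | last => exact absurd hij (lt_irrefl _)
    | cast a => simpa [Fin.init] using (hz (Fin.castSucc_lt_last a)).trans_le ht
  | cast b =>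
    induction i using Fin.lastCases with
    | last => exact absurd hij (Fin.castSucc_lt_last b).not_gt
    | cast a => simpa [Fin.init] using hz hij

theorem strictMono_comp_sort {k N : ℕ} {φ : Fin k → Fin N} (hφ : Function.Injective φ) :
    StrictMono (φ ∘ Tuple.sort φ) :=
  (Tuple.monotone_sort φ).strictMono_of_injective (hφ.comp (Tuple.sort φ).injective)

noncomputable def orderEmbProdPermEquivInjective (k N : ℕ) :
    (Fin k ↪o Fin N) × Perm (Fin k) ≃ {φ : Fin k → Fin N // Function.Injective φ} where
  toFun p := ⟨p.1 ∘ p.2, p.1.injective.comp p.2.injective⟩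
  invFun φ := (OrderEmbedding.ofStrictMono _ (strictMono_comp_sort φ.2), (Tuple.sort φ.1)⁻¹)
  left_inv := by
    rintro ⟨ψ, τ⟩
    have hinj : Function.Injective (ψ ∘ τ) := ψ.injective.comp τ.injective
    have h : (ψ ∘ τ) ∘ Tuple.sort (ψ ∘ τ) = ψ := by
      rw [← (strictMono_comp_sort hinj).range_inj ψ.strictMono,
        (Tuple.sort _).surjective.range_comp, τ.surjective.range_comp]
    refine Prod.ext (DFunLike.ext' h) (Equiv.ext fun i => ψ.injective ?_)
    simpa using (congrFun h ((Tuple.sort (ψ ∘ τ))⁻¹ i)).symm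
  right_inv φ := Subtype.ext <| by
    simp [Function.comp_assoc]

end Fin

namespace Matrix

section CauchyBinet

open Equiv

variable {R : Type*} [CommRing R] {k N : ℕ}

theorem det_mul_eq_sum_prod (A : Matrix (Fin k) (Fin N) R) (B : Matrix (Fin N) (Fin k) R) :
    (A * B).det = ∑ φ : Fin k → Fin N, (A.submatrix id φ).det * ∏ i, B (φ i) i := by
  have hexp : (A * B).det = ∑ φ : Fin k → Fin N, ∑ τ : Perm (Fin k),
      (Perm.sign τ : R) * ∏ i, A (τ i) (φ i) * B (φ i) i := by
    simp only [det_apply', mul_apply, prod_univ_sum, mul_sum, Fintype.piFinset_univ]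
    rw [sum_comm]
  rw [hexp]
  refine sum_congr rfl fun φ _ => ?_
  simp only [det_apply', sum_mul, prod_mul_distrib, submatrix_apply, id_eq, mul_assoc]

theorem det_mul_eq_sum_orderEmbedding (A : Matrix (Fin k) (Fin N) R)
    (B : Matrix (Fin N) (Fin k) R) :
    (A * B).det = ∑ ψ : Fin k ↪o Fin N, (A.submatrix id ψ).det * (B.submatrix ψ id).det := by
  have hnoninj : ∑ φ : {φ : Fin k → Fin N // ¬ Function.Injective φ},
      (A.submatrix id φ.1).det * ∏ i, B (φ.1 i) i = 0 := by
    refine sum_eq_zero fun ⟨φ, hφ⟩ _ => ?_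
    obtain ⟨i, j, hij, hne⟩ := Function.not_injective_iff.mp hφ
    rw [det_zero_of_column_eq hne fun r => by simp [hij], zero_mul]
  rw [det_mul_eq_sum_prod, ← Fintype.sum_subtype_add_sum_subtype Function.Injective, hnoninj,
    add_zero, ← (Fin.orderEmbProdPermEquivInjective k N).sum_comp, Fintype.sum_prod_type]
  refine sum_congr rfl fun ψ _ => ?_
  rw [det_apply' (B.submatrix ψ id), mul_sum]
  refine sum_congr rfl fun τ _ => ?_
  have hperm : (A.submatrix id (ψ ∘ τ)).det = Perm.sign τ * (A.submatrix id ψ).det :=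
    det_permute' τ (A.submatrix id ψ)
  simp only [Fin.orderEmbProdPermEquivInjective, Equiv.coe_fn_mk, hperm, submatrix_apply, id_eq,
    Function.comp_apply]
  ring

end CauchyBinet

theorem exists_det_submatrix_ne_zero {R : Type*} [Field R] [LinearOrder R] [IsStrictOrderedRing R]
    {k N : ℕ} {Y : Matrix (Fin k) (Fin N) R} (hY : LinearIndependent R Y.row) :
    ∃ ψ : Fin k ↪o Fin N, (Y.submatrix id ψ).det ≠ 0 := by
  have hrank : (Y * Yᵀ).rank = k := by
    rw [rank_self_mul_transpose, hY.rank_matrix, Fintype.card_fin]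
  have hgram : (Y * Yᵀ).det ≠ 0 := by
    have hrows : LinearIndependent R (Y * Yᵀ).row := linearIndependent_iff_card_eq_finrank_span.mpr
      (by rw [Set.finrank, ← rank_eq_finrank_span_row, hrank, Fintype.card_fin])
    exact ((isUnit_iff_isUnit_det _).mp (linearIndependent_rows_iff_isUnit.mp hrows)).ne_zero
  rw [det_mul_eq_sum_orderEmbedding] at hgram
  obtain ⟨ψ, -, hψ⟩ := exists_ne_zero_of_sum_ne_zero hgram
  exact ⟨ψ, left_ne_zero_of_mul hψ⟩

def genVandermonde {k : ℕ} (z : Fin k → ℝ) (e : Fin k → ℕ) : Matrix (Fin k) (Fin k) ℝ :=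
  of fun i j => z i ^ e j

theorem det_genVandermonde_ne_zero {k : ℕ} {z : Fin k → ℝ} {e : Fin k → ℕ}
    (hz : Function.Injective z) (hpos : ∀ i, 0 < z i) (he : Function.Injective e) :
    (genVandermonde z e).det ≠ 0 := by
  intro hdet
  obtain ⟨c, hc, hcz⟩ := exists_mulVec_eq_zero_iff.mpr hdet
  set P : ℝ[X] := ∑ j, monomial (e j) (c j)
  have hP : P ≠ 0 := by
    obtain ⟨j, hj⟩ := Function.ne_iff.mp hc
    exact ne_of_apply_ne (coeff · (e j)) (by simpa [P, coeff_sum_monomial c he] using hj)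
  have hroots : ∀ x ∈ univ.image z, 0 < x ∧ P.IsRoot x := by
    simp only [mem_image, mem_univ, true_and, forall_exists_index, forall_apply_eq_imp_iff]
    refine fun i => ⟨hpos i, ?_⟩
    simpa [P, IsRoot, eval_sum_monomial, mulVec, dotProduct, genVandermonde, mul_comm]
      using congrFun hcz i
  have := card_lt_card_support_of_pos_isRoot hP hroots
  rw [card_image_of_injective _ hz, card_univ, Fintype.card_fin] at this
  exact this.not_ge (card_support_sum_monomial_le e c)

theorem det_genVandermonde_snoc {k : ℕ} (z : Fin k → ℝ) (e : Fin (k + 1) → ℕ) (t : ℝ) :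
    (genVandermonde (Fin.snoc z t) e).det = (∑ j, monomial (e j)
      ((-1) ^ (k + j : ℕ) * (genVandermonde z (e ∘ j.succAbove)).det)).eval t := by
  rw [det_succ_row _ (Fin.last k), eval_sum_monomial]
  refine sum_congr rfl fun j _ => ?_
  have hminor : (genVandermonde (Fin.snoc z t) e).submatrix (Fin.last k).succAbove j.succAbove =
      genVandermonde z (e ∘ j.succAbove) := by
    ext a b
    simp [genVandermonde, Fin.succAbove_last]
  rw [hminor]
  simp only [genVandermonde, of_apply, Fin.snoc_last, Fin.val_last]
  ring

theorem det_genVandermonde_pos {k : ℕ} {z : Fin k → ℝ} {e : Fin k → ℕ}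
    (hz : StrictMono z) (hpos : ∀ i, 0 < z i) (he : StrictMono e) :
    0 < (genVandermonde z e).det := by
  induction k with
  | zero => simp
  | succ k ih =>
    set P : ℝ[X] := ∑ j, monomial (e j)
      ((-1) ^ (k + j : ℕ) * (genVandermonde (Fin.init z) (e ∘ j.succAbove)).det)
    have hdet (t : ℝ) : (genVandermonde (Fin.snoc (Fin.init z) t) e).det = P.eval t :=
      det_genVandermonde_snoc _ e t
    have hlead : 0 < P.leadingCoeff := by
      have hminor : 0 < (genVandermonde (Fin.init z) (e ∘ (Fin.last k).succAbove)).det :=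
        ih (hz.comp Fin.strictMono_castSucc) (fun i => hpos _)
          (he.comp (Fin.strictMono_succAbove _))
      rw [leadingCoeff_sum_monomial he _ (by simpa using hminor.ne')]
      simpa [← two_mul, pow_mul] using hminor
    have hne (t : ℝ) (ht : z (Fin.last k) ≤ t) : P.eval t ≠ 0 := by
      rw [← hdet]
      refine det_genVandermonde_ne_zero (Fin.strictMono_snoc_init hz ht).injective (fun i => ?_)
        he.injective
      induction i using Fin.lastCases <;> simp [Fin.init, hpos, (hpos _).trans_le ht]
    obtain ⟨T, hTpos, hT⟩ := ((eventually_pos_of_leadingCoeff_pos hlead).and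
      (eventually_ge_atTop (z (Fin.last k)))).exists
    rw [← Fin.snoc_init_self z, hdet]
    by_contra! hle
    obtain ⟨c, hc, hc0⟩ := intermediate_value_Icc hT P.continuousOn ⟨hle, hTpos.le⟩
    exact hne c hc.1 hc0

noncomputable def gaussianKernel (n : ℕ) (σ : ℝ) : Matrix (Fin n) (Fin n) ℝ :=
  of fun i j => Real.exp (-σ * (((i : ℕ) : ℝ) - ((j : ℕ) : ℝ)) ^ 2)

theorem det_submatrix_gaussianKernel_pos {n k : ℕ} {σ : ℝ} (hσ : 0 < σ) {f g : Fin k → Fin n}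
    (hf : StrictMono f) (hg : StrictMono g) : 0 < ((gaussianKernel n σ).submatrix f g).det := by
  have hfactor : ((gaussianKernel n σ).submatrix f g).det =
      (∏ a, Real.exp (-σ * (f a : ℝ) ^ 2)) * ((∏ b, Real.exp (-σ * (g b : ℝ) ^ 2)) *
        (genVandermonde (fun a => Real.exp (2 * σ * f a)) (fun b => g b)).det) := by
    rw [← det_mul_row, ← det_mul_column]
    congr 1
    ext a b
    simp only [gaussianKernel, genVandermonde, submatrix_apply, of_apply, ← Real.exp_nat_mul,
      ← Real.exp_add]
    ring_nf
  have hnodes : StrictMono fun a => Real.exp (2 * σ * f a) := fun a b hab =>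
    Real.exp_lt_exp.mpr (mul_lt_mul_of_pos_left (Nat.cast_lt.mpr (hf hab)) (by positivity))
  rw [hfactor]
  exact mul_pos (prod_pos fun a _ => Real.exp_pos _) (mul_pos (prod_pos fun b _ => Real.exp_pos _)
    (det_genVandermonde_pos hnodes (fun a => Real.exp_pos _) fun a b hab => hg hab))

end Matrix

theorem SC.ssc_mul {n N m k : ℕ} {T : Matrix (Fin n) (Fin N) ℝ} {X : Matrix (Fin N) (Fin m) ℝ}
    (hT : ∀ (f : Fin k → Fin n) (g : Fin k → Fin N), StrictMono f → StrictMono g →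
      0 < (T.submatrix f g).det)
    (hX : SC X k)
    (hli : ∀ g : Fin k → Fin m, StrictMono g → LinearIndependent ℝ fun i => Xᵀ (g i)) :
    SSC (T * X) k := by
  have hminor (f : Fin k → Fin n) (g : Fin k → Fin m) : ((T * X).submatrix f g).det =
      ∑ ψ : Fin k ↪o Fin N, (T.submatrix f ψ).det * (X.submatrix ψ g).det := by
    rw [submatrix_mul _ _ f id g Function.bijective_id, det_mul_eq_sum_orderEmbedding]
    rfl
  have hnz (g : Fin k → Fin m) (hg : StrictMono g) : ∃ ψ : Fin k ↪o Fin N,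
      (X.submatrix ψ g).det ≠ 0 := by
    obtain ⟨ψ, hψ⟩ := exists_det_submatrix_ne_zero (Y := (X.submatrix id g)ᵀ) (hli g hg)
    exact ⟨ψ, by rwa [← det_transpose]⟩
  rcases hX with hpos | hneg
  · refine Or.inl fun f g hf hg => ?_
    obtain ⟨ψ₀, hψ₀⟩ := hnz g hg
    rw [hminor]
    refine sum_pos' (fun ψ _ => mul_nonneg (hT f ψ hf ψ.strictMono).le
      (hpos ψ g ψ.strictMono hg)) ⟨ψ₀, mem_univ _, mul_pos (hT f ψ₀ hf ψ₀.strictMono)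
        ((hpos ψ₀ g ψ₀.strictMono hg).lt_of_ne' hψ₀)⟩
  · refine Or.inr fun f g hf hg => ?_
    obtain ⟨ψ₀, hψ₀⟩ := hnz g hg
    rw [hminor]
    refine sum_neg' (fun ψ _ => mul_nonpos_of_nonneg_of_nonpos (hT f ψ hf ψ.strictMono).le
      (hneg ψ g ψ.strictMono hg)) ⟨ψ₀, mem_univ _, mul_neg_of_pos_of_neg
        (hT f ψ₀ hf ψ₀.strictMono) ((hneg ψ₀ g ψ₀.strictMono hg).lt_of_ne hψ₀)⟩

theorem stmt14_general {n m : ℕ} (σ : ℝ) (hσ : 0 < σ) (X : Matrix (Fin n) (Fin m) ℝ) (k : ℕ)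
    (hsc : SC X k)
    (hli : ∀ g : Fin k → Fin m, Function.Injective g →
      LinearIndependent ℝ (fun i : Fin k => X.transpose (g i))) :
    SSC ((Matrix.of fun i j : Fin n =>
        Real.exp (-σ * (((i : ℕ) : ℝ) - ((j : ℕ) : ℝ)) ^ 2)) * X) k :=
  SC.ssc_mul (fun _ _ => det_submatrix_gaussianKernel_pos hσ) hsc fun g hg => hli g hg.injective

/-- if `X` is `k`-sign consistent and every `k` columns of `X` are linearly
independent, then `T(σ)·X` is strictly `k`-sign consistent. -/
theorem stmt14 {n m : ℕ} (σ : ℝ) (hσ : 0 < σ) (X : Matrix (Fin n) (Fin m) ℝ) (k : ℕ)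
    (hmn : m ≤ n) (hkm : k ≤ m)
    (hsc : SC X k)
    (hli : ∀ g : Fin k → Fin m, Function.Injective g →
      LinearIndependent ℝ (fun i : Fin k => X.transpose (g i))) :
    SSC ((Matrix.of fun i j : Fin n =>
        Real.exp (-σ * (((i : ℕ) : ℝ) - ((j : ℕ) : ℝ)) ^ 2)) * X) k :=
  stmt14_general σ hσ X k hsc hli
end

section
/- Let σ > 0 and let T(σ) be the n×n real matrix with entries T(σ)_{ij} = e^{−σ(i−j)²}. Let X be a real n×m matrix with m ≤ n and rank(X) = m, and let k ≤ m. If X is (k−1)-variation bounding, then T(σ)·X is strictly (k−1)-variation bounding. -/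
open Matrix Polynomial Filter

/-!
The Gaussian kernel `e^{-σ(i-j)²} = e^{-σi²} e^{-σj²} (e^{2σi})^j` is strictly totally positive:
its minors are positive multiples of generalized Vandermonde determinants `det (x_k ^ a_l)`,
which never vanish by Descartes' rule of signs and are positive by continuity from the ordinary
Vandermonde case.

A strictly totally positive `T` satisfies `V_z(Tv) ≤ V(v)` for `v ≠ 0`. Grouping the nonzero
entries of `v` into its `p = V(v) + 1` sign blocks writes `Tv = Bc` with `c` alternating and all
`p × p` minors of `B` positive (Cauchy–Binet). If some filling of `Bc` had `p` sign changes, `Bc`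
would weakly alternate on `p + 1` rows; expanding the singular matrix `[Bc | B]` on those rows
along its first column forces `Bc` to vanish there, and then `c = 0`.

Since `rank X = m`, `Xu ≠ 0` for `u ≠ 0`, so `V_z(T X u) ≤ V(X u) ≤ k - 1`.
-/

theorem Polynomial.signVariations_lt_card_support_s15 {R : Type*} [Semiring R] [LinearOrder R]
    {P : R[X]} (hP : P ≠ 0) : P.signVariations < P.support.card := by
  induction h : P.support.card generalizing P with
  | zero => exact absurd (card_support_eq_zero.1 h) hP
  | succ k ih =>
    by_cases hE : P.eraseLead = 0
    · rw [← eraseLead_add_monomial_natDegree_leadingCoeff P, hE, zero_add,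
        signVariations_monomial]
      exact k.succ_pos
    · have := ih hE (card_support_eraseLead' h)
      have := P.signVariations_le_eraseLead_succ
      omega

theorem eq_zero_of_forall_sum_mul_pow_eq_zero {p : ℕ} {a : Fin p → ℕ} (ha : Function.Injective a)
    {x : Fin p → ℝ} (hx : Function.Injective x) (hx0 : ∀ i, 0 < x i) {c : Fin p → ℝ}
    (h : ∀ i, ∑ j, c j * x i ^ a j = 0) : c = 0 := by
  set P : ℝ[X] := ∑ j, monomial (a j) (c j)
  have hcoeff : ∀ j, P.coeff (a j) = c j := fun j => by
    simp [P, finsetSum_coeff, coeff_monomial, ha.eq_iff]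
  suffices hP : P = 0 from funext fun j => by rw [← hcoeff, hP, coeff_zero, Pi.zero_apply]
  by_contra hP
  have hsupp : P.support ⊆ Finset.univ.image a := fun d hd => by
    obtain ⟨j, -, hj⟩ := Finset.exists_ne_zero_of_sum_ne_zero
      (by simpa [P, finsetSum_coeff] using mem_support_iff.1 hd)
    simp only [coeff_monomial, ne_eq, ite_eq_right_iff, not_forall] at hj
    exact Finset.mem_image.2 ⟨j, Finset.mem_univ _, hj.1⟩
  have hroots : Finset.univ.image x ⊆ (P.roots.filter (0 < ·)).toFinset := fun y hy => by
    obtain ⟨i, -, rfl⟩ := Finset.mem_image.1 hy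
    simpa [mem_roots hP, P, eval_finsetSum, hx0 i, mul_comm] using h i
  have := calc p = (Finset.univ.image x).card := by rw [Finset.card_image_of_injective _ hx]; simp
    _ ≤ (P.roots.filter (0 < ·)).card := (Finset.card_le_card hroots).trans
        (Multiset.toFinset_card_le _)
    _ = P.roots.countP (0 < ·) := (Multiset.countP_eq_card_filter _ _).symm
    _ ≤ P.signVariations := roots_countP_pos_le_signVariations P
    _ < P.support.card := signVariations_lt_card_support_s15 hP
    _ ≤ (Finset.univ.image a).card := Finset.card_le_card hsupp
    _ ≤ p := Finset.card_image_le.trans (by simp)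
  exact this.false

theorem det_pow_ne_zero {p : ℕ} {a : Fin p → ℕ} (ha : Function.Injective a) {x : Fin p → ℝ}
    (hx : Function.Injective x) (hx0 : ∀ i, 0 < x i) :
    (of fun i j => x i ^ a j).det ≠ 0 := fun hdet => by
  obtain ⟨c, hc, hMc⟩ := exists_mulVec_eq_zero_iff.2 hdet
  exact hc (eq_zero_of_forall_sum_mul_pow_eq_zero ha hx hx0 fun i => by
    simpa [mulVec, dotProduct, mul_comm] using congrFun hMc i)

theorem one_sub_mul_add_mul_lt {a b c d s : ℝ} (hab : a < b) (hcd : c < d) (hs0 : 0 ≤ s)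
    (hs1 : s ≤ 1) : (1 - s) * a + s * c < (1 - s) * b + s * d := by
  rcases hs1.lt_or_eq with hs1 | rfl
  · nlinarith [mul_lt_mul_of_pos_left hab (sub_pos.2 hs1), mul_le_mul_of_nonneg_left hcd.le hs0]
  · simpa using hcd

theorem det_pow_pos {p : ℕ} {a : Fin p → ℕ} (ha : StrictMono a) {x : Fin p → ℝ}
    (hx : StrictMono x) (hx0 : ∀ i, 0 < x i) : 0 < (of fun i j => x i ^ a j).det := by
  set x₀ : Fin p → ℝ := fun i => 2 ^ (i : ℕ)
  -- At `x₀` the matrix is the transposed Vandermonde matrix of the nodes `2 ^ a j`.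
  have hbase : 0 < (of fun i j => x₀ i ^ a j).det := by
    have : (of fun i j => x₀ i ^ a j) = (vandermonde fun j => (2 : ℝ) ^ a j)ᵀ := by
      ext i j
      simp [x₀, ← pow_mul, mul_comm]
    rw [this, det_transpose, det_vandermonde]
    exact Finset.prod_pos fun i _ => Finset.prod_pos fun j hj =>
      sub_pos.2 (pow_lt_pow_right₀ one_lt_two (ha (Finset.mem_Ioi.1 hj)))
  set φ : ℝ → ℝ := fun s => (of fun i j => ((1 - s) * x₀ i + s * x i) ^ a j).det
  have hφ : ∀ s ∈ Set.Icc (0 : ℝ) 1, φ s ≠ 0 := by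
    rintro s ⟨hs0, hs1⟩
    have hx₀ : StrictMono x₀ := fun i j hij => pow_lt_pow_right₀ one_lt_two hij
    refine det_pow_ne_zero ha.injective (StrictMono.injective fun i j hij => ?_) fun i => ?_
    · exact one_sub_mul_add_mul_lt (hx₀ hij) (hx hij) hs0 hs1
    · simpa using one_sub_mul_add_mul_lt (by positivity : 0 < x₀ i) (hx0 i) hs0 hs1
  have hcont : Continuous φ := by fun_prop
  by_contra! hle
  obtain ⟨s, hs, hφs⟩ := intermediate_value_Icc' zero_le_one hcont.continuousOn
    ⟨by simpa [φ] using hle, by simpa [φ] using hbase.le⟩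
  exact hφ s hs hφs

theorem stp_gaussian {n m : ℕ} {σ : ℝ} (hσ : 0 < σ) :
    STP (of fun (i : Fin n) (j : Fin m) =>
      Real.exp (-σ * (((i : ℕ) : ℝ) - ((j : ℕ) : ℝ)) ^ 2)) := by
  intro p f g hf hg
  set x : Fin p → ℝ := fun k => Real.exp (2 * σ * (f k : ℕ))
  have hfactor : (of fun (i : Fin n) (j : Fin m) =>
      Real.exp (-σ * (((i : ℕ) : ℝ) - ((j : ℕ) : ℝ)) ^ 2)).submatrix f g =
      of fun k l => Real.exp (-σ * ((f k : ℕ) : ℝ) ^ 2) *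
        (of fun k l => Real.exp (-σ * ((g l : ℕ) : ℝ) ^ 2) *
          (of fun k l => x k ^ (g l : ℕ)) k l) k l := by
    ext k l
    simp only [submatrix_apply, of_apply, x, ← Real.exp_nat_mul, ← Real.exp_add]
    ring_nf
  rw [hfactor, det_mul_column, det_mul_row]
  have hx : StrictMono x := fun k l hkl =>
    Real.exp_lt_exp.2 (mul_lt_mul_of_pos_left (Nat.cast_lt.2 (hf hkl)) (by positivity))
  have := det_pow_pos (a := fun l => (g l : ℕ)) (fun _ _ h => hg h) hx fun k => Real.exp_pos _
  positivity

noncomputable def prefixSignChanges (z : ℕ → ℝ) (t : ℕ) : ℕ :=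
  ∑ s ∈ Finset.range t, if z s * z (s + 1) < 0 then 1 else 0

theorem prefixSignChanges_succ_le (z : ℕ → ℝ) (t : ℕ) :
    prefixSignChanges z (t + 1) ≤ prefixSignChanges z t + 1 := by
  rw [prefixSignChanges, Finset.sum_range_succ]
  split_ifs <;> simp [prefixSignChanges]

theorem prefixSignChanges_mono (z : ℕ → ℝ) : Monotone (prefixSignChanges z) :=
  fun _ _ hst => Finset.sum_le_sum_of_subset (Finset.range_subset_range.2 hst)

theorem exists_prefixSignChanges_eq (z : ℕ → ℝ) {l T : ℕ} (h : l ≤ prefixSignChanges z T) :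
    ∃ t ≤ T, prefixSignChanges z t = l := by
  induction T with
  | zero => exact ⟨0, le_rfl, by simp_all [prefixSignChanges]⟩
  | succ T ih =>
    by_cases hT : l ≤ prefixSignChanges z T
    · obtain ⟨t, ht, hzt⟩ := ih hT
      exact ⟨t, ht.trans T.le_succ, hzt⟩
    · exact ⟨T + 1, le_rfl, by have := prefixSignChanges_succ_le z T; omega⟩

theorem mul_neg_one_pow_prefixSignChanges_mul_pos (z : ℕ → ℝ) {t : ℕ}
    (hz : ∀ s ≤ t, z s ≠ 0) : 0 < z 0 * (-1) ^ prefixSignChanges z t * z t := by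
  induction t with
  | zero => simpa [prefixSignChanges] using mul_self_pos.2 (hz 0 le_rfl)
  | succ t ih =>
    have ih := ih fun s hs => hz s (hs.trans t.le_succ)
    have hflip : 0 < (-1) ^ (if z t * z (t + 1) < 0 then 1 else 0) * (z t * z (t + 1)) := by
      split_ifs with h
      · simpa using h
      · simpa using (not_lt.1 h).lt_of_ne (mul_ne_zero (hz t t.le_succ) (hz _ le_rfl)).symm
    rw [prefixSignChanges, Finset.sum_range_succ, ← prefixSignChanges]
    refine pos_of_mul_pos_left (b := z t ^ 2) ?_ (sq_nonneg _)
    convert mul_pos ih hflip using 1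
    ring

theorem signChanges_cons_cons (x y : ℝ) (l : List ℝ) :
    signChanges (x :: y :: l) = (if x * y < 0 then 1 else 0) + signChanges (y :: l) := by
  simp only [signChanges, List.tail_cons, List.zip_cons_cons, List.countP_cons]
  split_ifs <;> simp_all [add_comm]

theorem signChanges_eq_prefixSignChanges (l : List ℝ) :
    signChanges l = prefixSignChanges (fun s => l.getD s 0) (l.length - 1) := by
  induction l with
  | nil => simp [signChanges, prefixSignChanges]
  | cons x l ih =>
    cases l with
    | nil => simp [signChanges, prefixSignChanges]
    | cons y l =>
      rw [signChanges_cons_cons, ih]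
      simp only [prefixSignChanges, List.length_cons, Nat.add_sub_cancel,
        Finset.sum_range_succ' _ (l.length), List.getD_cons_succ, List.getD_cons_zero]
      ring

theorem List.getD_ofFn {q : ℕ} (u : Fin q → ℝ) (t : Fin q) : (List.ofFn u).getD t 0 = u t := by
  simp

theorem signChanges_ofFn_eq_prefixSignChanges {q : ℕ} (u : Fin q → ℝ) :
    signChanges (List.ofFn u) = prefixSignChanges (fun s => (List.ofFn u).getD s 0) (q - 1) := by
  rw [signChanges_eq_prefixSignChanges, List.length_ofFn]

theorem mul_neg_one_pow_prefixSignChanges_ofFn_mul_pos {q : ℕ} (u : Fin q → ℝ)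
    (hu : ∀ t, u t ≠ 0) (t : Fin q) :
    0 < u ⟨0, t.pos⟩ * (-1) ^ prefixSignChanges (fun s => (List.ofFn u).getD s 0) t * u t := by
  have h := mul_neg_one_pow_prefixSignChanges_mul_pos (fun s => (List.ofFn u).getD s 0)
    (t := t) fun s hs => by simpa only [List.getD_ofFn u ⟨s, by omega⟩] using hu ⟨s, by omega⟩
  rwa [List.getD_ofFn u t, List.getD_ofFn u ⟨0, t.pos⟩] at h

theorem exists_sign_blocks {q : ℕ} (u : Fin q → ℝ) (hq : 0 < q) (hu : ∀ t, u t ≠ 0) :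
    ∃ a : Fin q → Fin (signChanges (List.ofFn u) + 1), Monotone a ∧ Function.Surjective a ∧
      ∃ ε ≠ 0, ∀ t, 0 < ε * (-1) ^ (a t : ℕ) * u t := by
  have hV := signChanges_ofFn_eq_prefixSignChanges u
  set z : ℕ → ℝ := fun s => (List.ofFn u).getD s 0
  refine ⟨fun t => ⟨prefixSignChanges z t,
      Nat.lt_succ_of_le (hV ▸ prefixSignChanges_mono z (Nat.le_sub_one_of_lt t.is_lt))⟩,
    fun t t' h => Fin.mk_le_mk.2 (prefixSignChanges_mono z h), fun l => ?_,
    u ⟨0, hq⟩, hu _, mul_neg_one_pow_prefixSignChanges_ofFn_mul_pos u hu⟩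
  obtain ⟨t, ht, hzt⟩ := exists_prefixSignChanges_eq _ (l.is_le.trans_eq hV)
  exact ⟨⟨t, by omega⟩, Fin.ext hzt⟩

theorem exists_strictMono_alternating {n p : ℕ} (w : Fin n → ℝ) (hw : ∀ i, w i ≠ 0)
    (hn : 0 < n) (hp : p ≤ signChanges (List.ofFn w)) :
    ∃ r : Fin (p + 1) → Fin n, StrictMono r ∧
      ∃ ε ≠ 0, ∀ j : Fin (p + 1), 0 < ε * (-1) ^ (j : ℕ) * w (r j) := by
  have hV := signChanges_ofFn_eq_prefixSignChanges w
  set z : ℕ → ℝ := fun s => (List.ofFn w).getD s 0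
  choose t ht hzt using fun j : Fin (p + 1) =>
    exists_prefixSignChanges_eq _ ((Nat.lt_succ_iff.1 j.is_lt).trans (hp.trans_eq hV))
  have htn : ∀ j, t j < n := fun j => by have := ht j; omega
  refine ⟨fun j => ⟨t j, htn j⟩, fun j j' hjj' => ?_, w ⟨0, hn⟩, hw _, fun j => ?_⟩
  · by_contra! h
    have : prefixSignChanges z (t j') ≤ prefixSignChanges z (t j) :=
      prefixSignChanges_mono z (Fin.mk_le_mk.1 h)
    rw [hzt, hzt] at this
    exact (Fin.lt_def.1 hjj').not_ge this
  · convert mul_neg_one_pow_prefixSignChanges_ofFn_mul_pos w hw ⟨t j, htn j⟩ using 4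
    exact (hzt j).symm

theorem maxVariation_le {n : ℕ} (y : Fin n → ℝ) (K : ℤ)
    (h : ∀ w : Fin n → ℝ, (∀ i, w i ≠ 0) → (∀ i, y i ≠ 0 → w i = y i) →
      (signChanges (List.ofFn w) : ℤ) ≤ K) :
    maxVariation y ≤ K := by
  refine csSup_le ⟨_, fun i => if y i = 0 then 1 else y i, fun i => ?_, fun i hi => if_neg hi,
    rfl⟩ ?_
  · dsimp only
    split_ifs with hi
    · exact one_ne_zero
    · exact hi
  · rintro _ ⟨w, hw, hwy, rfl⟩
    exact h w hw hwy

theorem mulVec_apply_eq_zero_of_alternating {n p : ℕ} (B : Matrix (Fin n) (Fin p) ℝ)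
    (hB : ∀ r : Fin p → Fin n, StrictMono r → 0 < (B.submatrix r id).det) (c : Fin p → ℝ)
    (r : Fin (p + 1) → Fin n) (hr : StrictMono r) {ε : ℝ} (hε : ε ≠ 0)
    (halt : ∀ j : Fin (p + 1), 0 ≤ ε * (-1) ^ (j : ℕ) * (B *ᵥ c) (r j)) (j : Fin (p + 1)) :
    (B *ᵥ c) (r j) = 0 := by
  set M : Matrix (Fin (p + 1)) (Fin (p + 1)) ℝ :=
    of fun i => Fin.cons ((B *ᵥ c) (r i)) (B (r i))
  have hM : M.det = 0 := by
    rw [← exists_mulVec_eq_zero_iff]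
    refine ⟨Fin.cons (-1) c, fun h => by simpa using congrFun h 0, funext fun i => ?_⟩
    simp [M, mulVec, dotProduct, Fin.sum_univ_succ]
  have hD : ∀ i : Fin (p + 1), 0 < (B.submatrix (r ∘ i.succAbove) id).det :=
    fun i => hB _ (hr.comp (Fin.strictMono_succAbove i))
  have hexp : ∑ i : Fin (p + 1),
      ε * (-1) ^ (i : ℕ) * (B *ᵥ c) (r i) * (B.submatrix (r ∘ i.succAbove) id).det =
        ε * M.det := by
    rw [det_succ_column_zero, Finset.mul_sum]
    refine Finset.sum_congr rfl fun i _ => ?_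
    have : M.submatrix i.succAbove Fin.succ = B.submatrix (r ∘ i.succAbove) id := by
      ext; simp [M]
    simp only [this, M, of_apply, Fin.cons_zero]
    ring
  rw [hM, mul_zero] at hexp
  have := (Finset.sum_eq_zero_iff_of_nonneg fun i _ => mul_nonneg (halt i) (hD i).le).1 hexp j
    (Finset.mem_univ _)
  simpa [hε, (hD j).ne'] using this

theorem maxVariation_mulVec_lt {n p : ℕ} (B : Matrix (Fin n) (Fin p) ℝ)
    (hB : ∀ r : Fin p → Fin n, StrictMono r → 0 < (B.submatrix r id).det) {c : Fin p → ℝ}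
    (hc : c ≠ 0) : maxVariation (B *ᵥ c) < p := by
  suffices maxVariation (B *ᵥ c) ≤ p - 1 by omega
  refine maxVariation_le _ _ fun w hw hwy => ?_
  by_contra! h
  have hp : p ≤ signChanges (List.ofFn w) := by omega
  have hn : 0 < n := by
    refine Nat.pos_of_ne_zero fun hn => hc ?_
    subst hn
    have : p = 0 := by simpa [signChanges] using hp
    subst this
    exact Subsingleton.elim _ _
  obtain ⟨r, hr, ε, hε, halt⟩ := exists_strictMono_alternating w hw hn hp
  have hzero := mulVec_apply_eq_zero_of_alternating B hB c r hr hε fun j => by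
    by_cases hy : (B *ᵥ c) (r j) = 0
    · simp [hy]
    · exact hwy _ hy ▸ (halt j).le
  exact hc (eq_zero_of_mulVec_eq_zero (hB _ (hr.comp (Fin.strictMono_castSucc))).ne'
    (funext fun j => hzero j.castSucc))

theorem det_mul_eq_sum_det_submatrix {R m ι : Type*} [CommRing R] [Fintype m] [DecidableEq m]
    [Fintype ι] (A : Matrix m ι R) (U : Matrix ι m R) :
    (A * U).det = ∑ G : m → ι, (∏ l, U (G l) l) * (A.submatrix id G).det := by
  simp only [det_apply', mul_apply, Finset.prod_univ_sum, Finset.mul_sum, Fintype.piFinset_univ,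
    submatrix_apply, id, Finset.prod_mul_distrib]
  rw [Finset.sum_comm]
  refine Finset.sum_congr rfl fun G _ => Finset.sum_congr rfl fun σ _ => ?_
  ring

theorem det_mul_pos_of_blocks {p q : ℕ} (A : Matrix (Fin p) (Fin q) ℝ)
    (hA : ∀ g : Fin p → Fin q, StrictMono g → 0 < (A.submatrix id g).det)
    (U : Matrix (Fin q) (Fin p) ℝ) (hU : ∀ t l, 0 ≤ U t l) (a : Fin q → Fin p)
    (ha : Monotone a) (hUa : ∀ t l, U t l ≠ 0 → a t = l) (hex : ∀ l, ∃ t, U t l ≠ 0) :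
    0 < (A * U).det := by
  rw [det_mul_eq_sum_det_submatrix]
  have hterm : ∀ G : Fin p → Fin q, (∀ l, U (G l) l ≠ 0) →
      0 < (∏ l, U (G l) l) * (A.submatrix id G).det := by
    intro G hG
    refine mul_pos (Finset.prod_pos fun l _ => (hU _ _).lt_of_ne (hG l).symm) (hA G ?_)
    intro l l' hll'
    by_contra! h
    have := ha h
    rw [hUa _ _ (hG l), hUa _ _ (hG l')] at this
    exact hll'.not_ge this
  choose G₀ hG₀ using hex
  refine Finset.sum_pos' (fun G _ => ?_) ⟨G₀, Finset.mem_univ _, hterm G₀ hG₀⟩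
  by_cases hG : ∃ l, U (G l) l = 0
  · obtain ⟨l, hl⟩ := hG
    rw [Finset.prod_eq_zero (f := fun l => U (G l) l) (Finset.mem_univ l) hl, zero_mul]
  · exact (hterm G fun l hl => hG ⟨l, hl⟩).le

theorem STP.submatrix_id_left {n N q : ℕ} {T : Matrix (Fin n) (Fin N) ℝ} (hT : STP T)
    {e : Fin q → Fin N} (he : StrictMono e) : STP (T.submatrix id e) :=
  fun j f g hf hg => by simpa [submatrix_submatrix] using hT j f (e ∘ g) hf (he.comp hg)

theorem STP.maxVariation_mulVec_le_signChanges {n q : ℕ} {T : Matrix (Fin n) (Fin q) ℝ}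
    (hT : STP T) {u : Fin q → ℝ} (hq : 0 < q) (hu : ∀ t, u t ≠ 0) :
    maxVariation (T *ᵥ u) ≤ signChanges (List.ofFn u) := by
  obtain ⟨a, ha, has, ε, hε, hsign⟩ := exists_sign_blocks u hq hu
  set c : Fin (signChanges (List.ofFn u) + 1) → ℝ := fun l => ε * (-1) ^ (l : ℕ)
  have hc : ∀ l, c l ≠ 0 := fun l => mul_ne_zero hε (by simp)
  -- Column `l` of `U` is a positive multiple of `|u|` on the `l`-th sign block.
  set U : Matrix (Fin q) (Fin (signChanges (List.ofFn u) + 1)) ℝ :=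
    of fun t l => if a t = l then u t / c l else 0
  have hUc : U *ᵥ c = u := funext fun t => by
    simp [U, mulVec, dotProduct, ite_mul, div_mul_cancel₀ _ (hc _)]
  have hB : ∀ r, StrictMono r → 0 < ((T * U).submatrix r id).det := by
    intro r hr
    refine det_mul_pos_of_blocks (T.submatrix r id) (fun g hg => hT _ r g hr hg) U
      (fun t l => ?_) a ha (fun t l h => ?_) (fun l => ?_)
    · simp only [U, of_apply]
      split_ifs with htl
      · subst htl
        exact (div_pos_iff.2 ((mul_pos_iff.1 (hsign t)).imp And.symm And.symm)).le
      · exact le_rfl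
    · by_contra htl
      simp [U, htl] at h
    · obtain ⟨t, rfl⟩ := has l
      exact ⟨t, by simp [U, hu t, hc]⟩
  have := maxVariation_mulVec_lt (T * U) hB (c := c) fun h => hc 0 (congrFun h 0)
  rw [← mulVec_mulVec, hUc] at this
  omega

theorem exists_strictMono_enum_support {N : ℕ} (v : Fin N → ℝ) :
    ∃ q, ∃ e : Fin q → Fin N, StrictMono e ∧ (∀ t, v (e t) ≠ 0) ∧
      (∀ j, v j ≠ 0 → j ∈ Set.range e) ∧
      (List.ofFn v).filter (fun x => decide (x ≠ 0)) = List.ofFn (v ∘ e) := by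
  set S := (List.finRange N).filter fun j => decide (v j ≠ 0)
  have hS : ∀ j, j ∈ S ↔ v j ≠ 0 := by simp [S]
  refine ⟨S.length, S.get, ((List.pairwise_lt_finRange N).filter _).sortedLT.strictMono_get,
    fun t => (hS _).1 (List.get_mem S t), fun j hj => List.mem_iff_get.1 ((hS j).2 hj), ?_⟩
  rw [List.ofFn_eq_map, List.filter_map, ← List.map_ofFn, List.ofFn_get]
  rfl

theorem mulVec_eq_submatrix_mulVec {R m ι κ : Type*} [Semiring R] [Fintype ι] [Fintype κ]
    (T : Matrix m ι R) (v : ι → R) {e : κ → ι} (he : Function.Injective e)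
    (hv : ∀ j, v j ≠ 0 → j ∈ Set.range e) : T *ᵥ v = T.submatrix id e *ᵥ (v ∘ e) := by
  ext i
  refine (Fintype.sum_of_injective e he _ _ (fun j hj => ?_) fun _ => rfl).symm
  by_contra h
  exact hj (hv j (right_ne_zero_of_mul h))

theorem STP.maxVariation_mulVec_le_variation {n N : ℕ} {T : Matrix (Fin n) (Fin N) ℝ}
    (hT : STP T) {v : Fin N → ℝ} (hv : v ≠ 0) : maxVariation (T *ᵥ v) ≤ variation v := by
  obtain ⟨q, e, he, hve, hsupp, hfilter⟩ := exists_strictMono_enum_support v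
  obtain ⟨j, hj⟩ := Function.ne_iff.1 hv
  obtain ⟨t, -⟩ := hsupp j hj
  rw [variation, hfilter, if_neg (by simpa using t.pos.ne'),
    mulVec_eq_submatrix_mulVec T v he.injective hsupp]
  exact (hT.submatrix_id_left he).maxVariation_mulVec_le_signChanges t.pos hve

theorem Matrix.eq_zero_of_mulVec_eq_zero_of_rank_eq {R m n : Type*} [Field R] [Fintype m]
    [Fintype n] {A : Matrix m n R} (hA : A.rank = Fintype.card n) {u : n → R}
    (hu : A *ᵥ u = 0) : u = 0 := by
  have h := LinearMap.finrank_range_add_finrank_ker A.mulVecLin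
  rw [← rank, hA, Module.finrank_fintype_fun_eq_card, add_eq_left,
    Submodule.finrank_eq_zero] at h
  exact ker_mulVecLin_eq_bot_iff.1 h u hu

theorem stmt15_general {n m : ℕ} (σ : ℝ) (hσ : 0 < σ) (X : Matrix (Fin n) (Fin m) ℝ) (k : ℕ)
    (hrk : X.rank = m)
    (hvb : VB X (k - 1)) :
    SVB ((Matrix.of fun i j : Fin n =>
        Real.exp (-σ * (((i : ℕ) : ℝ) - ((j : ℕ) : ℝ)) ^ 2)) * X) (k - 1) := by
  intro u hu hvar
  have hXu : X *ᵥ u ≠ 0 := fun h =>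
    hu (eq_zero_of_mulVec_eq_zero_of_rank_eq (hrk.trans (Fintype.card_fin m).symm) h)
  rw [← mulVec_mulVec]
  exact ((stp_gaussian hσ).maxVariation_mulVec_le_variation hXu).trans (hvb u hu hvar)

/-- if `rank X = m ≤ n` and `X` is `(k-1)`-variation bounding, `k ≤ m`,
then `T(σ)·X` is strictly `(k-1)`-variation bounding. -/
theorem stmt15 {n m : ℕ} (σ : ℝ) (hσ : 0 < σ) (X : Matrix (Fin n) (Fin m) ℝ) (k : ℕ)
    (hmn : m ≤ n) (hrk : X.rank = m) (hkm : k ≤ m)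
    (hvb : VB X (k - 1)) :
    SVB ((Matrix.of fun i j : Fin n =>
        Real.exp (-σ * (((i : ℕ) : ℝ) - ((j : ℕ) : ℝ)) ^ 2)) * X) (k - 1) :=
  stmt15_general σ hσ X k hrk hvb
end
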